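/- arXiv:2304.07157 — 7 statements merged into one kernel-verified Lean document; each statement's English description precedes it below -/
import Mathlib

section
/- In a latin square S (a set of triples (r,c,l) such that any two distinct triples differ in at least two coordinates, with every row-column pair, row-letter pair, and column-letter pair occurring exactly once), six distinct elements x, x', x'', y, y', y'' induce a complete bipartite subgraph K_{3,3} of the latin square graph Γ(S) with parts {x,x',x''} and {y,y',y''} if and only if there exist pairwise distinct r1,r2,r3, pairwise distinct c1,c2,c3, and pairwise distinct l1,l2,l3 such that {x,x',x''} = {(r1,c2,l3),(r2,c3,l1),(r3,c1,l2)} and {y,y',y''} = {(r2,c1,l3),(r3,c2,l1),(r1,c3,l2)}. -/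
/-- A latin square as a set of triples: every pair of coordinates determines a unique triple. -/
def IsLatinSquare {R C L : Type*} (S : Set (R × C × L)) : Prop :=
  (∀ r c, ∃! l, (r, c, l) ∈ S) ∧ (∀ r l, ∃! c, (r, c, l) ∈ S) ∧ (∀ c l, ∃! r, (r, c, l) ∈ S)

/-- Adjacency in the latin square graph: distinct triples agreeing in some coordinate. -/
def LSAdj {R C L : Type*} (u v : R × C × L) : Prop :=
  u ≠ v ∧ (u.1 = v.1 ∨ u.2.1 = v.2.1 ∨ u.2.2 = v.2.2)

/-! If `x₁, x₂, x₃` pairwise differ in every coordinate, a triple `y` adjacent to all three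
shares a coordinate with each of them and no coordinate with two of them, so by pigeonhole it takes
its row, column and symbol from the three `xᵢ` in some order: one of three "cyclic" triples or one
of three "anticyclic" ones. A cyclic and an anticyclic triple always share a coordinate, so an
independent set of three such triples is exactly the cyclic or exactly the anticyclic class, and
the labels `rᵢ, cᵢ, lᵢ` are read off from `x₁, x₂, x₃` (after swapping `x₂, x₃` in the
anticyclic case). -/

theorem Set.triple_eq_of_subset {α : Type*} {a b c y₁ y₂ y₃ : α}
    (h : ({y₁, y₂, y₃} : Set α) ⊆ {a, b, c}) (h₁₂ : y₁ ≠ y₂) (h₁₃ : y₁ ≠ y₃) (h₂₃ : y₂ ≠ y₃) :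
    ({y₁, y₂, y₃} : Set α) = {a, b, c} := by
  refine Set.eq_of_subset_of_ncard_le h ?_
  rw [Set.ncard_eq_three.2 ⟨_, _, _, h₁₂, h₁₃, h₂₃, rfl⟩]
  calc ({a, b, c} : Set α).ncard ≤ ({b, c} : Set α).ncard + 1 := Set.ncard_insert_le _ _
    _ ≤ 3 := by
      have := Set.ncard_insert_le b {c}
      rw [Set.ncard_singleton] at this
      omega

theorem Set.Pairwise.subset_or_subset_of_subset_union {α : Type*} {r : α → α → Prop}
    {s A B : Set α} (hs : s.Pairwise r) (hAB : s ⊆ A ∪ B) (hr : ∀ a ∈ A, ∀ b ∈ B, ¬ r a b) :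
    s ⊆ A ∨ s ⊆ B := by
  refine or_iff_not_imp_left.2 fun hA b hbs => ?_
  obtain ⟨a, has, haA⟩ := Set.not_subset.1 hA
  by_contra hbB
  have haB : a ∈ B := (hAB has).resolve_left haA
  have hbA : b ∈ A := (hAB hbs).resolve_right hbB
  exact hr b hbA a haB (hs hbs has fun hba => haA (hba ▸ hbA))

section
variable {R C L : Type*}

def Apart (u v : R × C × L) : Prop :=
  u.1 ≠ v.1 ∧ u.2.1 ≠ v.2.1 ∧ u.2.2 ≠ v.2.2

theorem Apart.symm {u v : R × C × L} (h : Apart u v) : Apart v u :=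
  ⟨h.1.symm, h.2.1.symm, h.2.2.symm⟩

instance : Std.Symm (Apart (R := R) (C := C) (L := L)) := ⟨fun _ _ => Apart.symm⟩

theorem not_lsAdj_iff_apart {u v : R × C × L} (huv : u ≠ v) : ¬ LSAdj u v ↔ Apart u v := by
  simp only [LSAdj, Apart, huv, ne_eq, not_false_eq_true, true_and, not_or]

theorem pairwise_not_lsAdj_iff {s : Set (R × C × L)} :
    s.Pairwise (fun u v => ¬ LSAdj u v) ↔ s.Pairwise Apart :=
  ⟨fun h _ hu _ hv huv => (not_lsAdj_iff_apart huv).1 (h hu hv huv),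
    fun h _ hu _ hv huv => (not_lsAdj_iff_apart huv).2 (h hu hv huv)⟩

theorem pairwise_apart_triple {x₁ x₂ x₃ : R × C × L}
    (h₁₂ : Apart x₁ x₂) (h₁₃ : Apart x₁ x₃) (h₂₃ : Apart x₂ x₃) :
    ({x₁, x₂, x₃} : Set (R × C × L)).Pairwise Apart := by
  simp [Set.pairwise_insert_of_symm, h₁₂, h₁₃, h₂₃]

def IsInducedK33 (X Y : Set (R × C × L)) : Prop :=
  (∀ u ∈ X, ∀ v ∈ Y, LSAdj u v) ∧ X.Pairwise (fun u v => ¬ LSAdj u v) ∧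
    Y.Pairwise (fun u v => ¬ LSAdj u v)

/-- The triples taking row, column and symbol from `x₂, x₃, x₁`, from `x₃, x₁, x₂` and from
`x₁, x₂, x₃`; swapping `x₂` and `x₃` gives the three triples of the opposite orientation. -/
def mates (x₁ x₂ x₃ : R × C × L) : Set (R × C × L) :=
  {(x₂.1, x₃.2.1, x₁.2.2), (x₃.1, x₁.2.1, x₂.2.2), (x₁.1, x₂.2.1, x₃.2.2)}

theorem pairwise_apart_mates {x₁ x₂ x₃ : R × C × L}
    (h₁₂ : Apart x₁ x₂) (h₁₃ : Apart x₁ x₃) (h₂₃ : Apart x₂ x₃) :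
    (mates x₁ x₂ x₃).Pairwise Apart :=
  pairwise_apart_triple ⟨h₂₃.1, h₁₃.2.1.symm, h₁₂.2.2⟩ ⟨h₁₂.1.symm, h₂₃.2.1.symm, h₁₃.2.2⟩
    ⟨h₁₃.1.symm, h₁₂.2.1, h₂₃.2.2⟩

theorem lsAdj_of_mem_mates {x₁ x₂ x₃ u v : R × C × L}
    (h₁₂ : Apart x₁ x₂) (h₁₃ : Apart x₁ x₃) (h₂₃ : Apart x₂ x₃)
    (hu : u ∈ ({x₁, x₂, x₃} : Set (R × C × L))) (hv : v ∈ mates x₁ x₂ x₃) : LSAdj u v := by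
  simp only [mates, Set.mem_insert_iff, Set.mem_singleton_iff] at hu hv
  obtain ⟨r₁₂, c₁₂, l₁₂⟩ := h₁₂
  obtain ⟨r₁₃, c₁₃, l₁₃⟩ := h₁₃
  obtain ⟨r₂₃, c₂₃, l₂₃⟩ := h₂₃
  rcases hu with rfl | rfl | rfl <;> rcases hv with rfl | rfl | rfl <;>
    simp_all [LSAdj, Prod.ext_iff, eq_comm]

theorem isInducedK33_mates {x₁ x₂ x₃ : R × C × L}
    (h₁₂ : Apart x₁ x₂) (h₁₃ : Apart x₁ x₃) (h₂₃ : Apart x₂ x₃) :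
    IsInducedK33 {x₁, x₂, x₃} (mates x₁ x₂ x₃) :=
  ⟨fun _ hu _ hv => lsAdj_of_mem_mates h₁₂ h₁₃ h₂₃ hu hv,
    pairwise_not_lsAdj_iff.2 (pairwise_apart_triple h₁₂ h₁₃ h₂₃),
    pairwise_not_lsAdj_iff.2 (pairwise_apart_mates h₁₂ h₁₃ h₂₃)⟩

-- Pigeonhole: `y` shares a coordinate with each `xᵢ`, and no coordinate with two of them.
theorem mem_mates_or_mem_mates_swap {x₁ x₂ x₃ y : R × C × L}
    (h₁₂ : Apart x₁ x₂) (h₁₃ : Apart x₁ x₃) (h₂₃ : Apart x₂ x₃)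
    (hy₁ : LSAdj x₁ y) (hy₂ : LSAdj x₂ y) (hy₃ : LSAdj x₃ y) :
    y ∈ mates x₁ x₂ x₃ ∨ y ∈ mates x₁ x₃ x₂ := by
  obtain ⟨r, c, l⟩ := y
  obtain ⟨-, hy₁⟩ := hy₁
  obtain ⟨-, hy₂⟩ := hy₂
  obtain ⟨-, hy₃⟩ := hy₃
  rcases hy₁ with h₁ | h₁ | h₁ <;> rcases hy₂ with h₂ | h₂ | h₂ <;>
    rcases hy₃ with h₃ | h₃ | h₃ <;> simp_all [mates, Apart]

theorem not_apart_of_mem_mates_of_mem_mates_swap {x₁ x₂ x₃ u v : R × C × L}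
    (hu : u ∈ mates x₁ x₂ x₃) (hv : v ∈ mates x₁ x₃ x₂) : ¬ Apart u v := by
  simp only [mates, Set.mem_insert_iff, Set.mem_singleton_iff] at hu hv
  rcases hu with rfl | rfl | rfl <;> rcases hv with rfl | rfl | rfl <;> simp [Apart]

theorem eq_mates_or_eq_mates_swap_of_isInducedK33 {x₁ x₂ x₃ y₁ y₂ y₃ : R × C × L}
    (hK : IsInducedK33 {x₁, x₂, x₃} {y₁, y₂, y₃})
    (hx₁₂ : x₁ ≠ x₂) (hx₁₃ : x₁ ≠ x₃) (hx₂₃ : x₂ ≠ x₃)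
    (hy₁₂ : y₁ ≠ y₂) (hy₁₃ : y₁ ≠ y₃) (hy₂₃ : y₂ ≠ y₃) :
    {y₁, y₂, y₃} = mates x₁ x₂ x₃ ∨ {y₁, y₂, y₃} = mates x₁ x₃ x₂ := by
  obtain ⟨hadj, hX, hY⟩ := hK
  rw [pairwise_not_lsAdj_iff] at hX hY
  have hmates : {y₁, y₂, y₃} ⊆ mates x₁ x₂ x₃ ∪ mates x₁ x₃ x₂ := fun y hy =>
    mem_mates_or_mem_mates_swap (hX (by simp) (by simp) hx₁₂) (hX (by simp) (by simp) hx₁₃)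
      (hX (by simp) (by simp) hx₂₃) (hadj _ (by simp) y hy) (hadj _ (by simp) y hy)
      (hadj _ (by simp) y hy)
  refine (hY.subset_or_subset_of_subset_union hmates fun _ hu _ hv =>
    not_apart_of_mem_mates_of_mem_mates_swap hu hv).imp ?_ ?_ <;>
  exact fun h => Set.triple_eq_of_subset h hy₁₂ hy₁₃ hy₂₃

-- Read the labels off `x₁ = (r1, c2, l3)`, `x₂ = (r2, c3, l1)`, `x₃ = (r3, c1, l2)`.
theorem exists_labelling_of_eq_mates {x₁ x₂ x₃ : R × C × L} {Y : Set (R × C × L)}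
    (h₁₂ : Apart x₁ x₂) (h₁₃ : Apart x₁ x₃) (h₂₃ : Apart x₂ x₃) (hY : Y = mates x₁ x₂ x₃) :
    ∃ r1 r2 r3 : R, ∃ c1 c2 c3 : C, ∃ l1 l2 l3 : L,
      r1 ≠ r2 ∧ r1 ≠ r3 ∧ r2 ≠ r3 ∧
      c1 ≠ c2 ∧ c1 ≠ c3 ∧ c2 ≠ c3 ∧
      l1 ≠ l2 ∧ l1 ≠ l3 ∧ l2 ≠ l3 ∧
      ({x₁, x₂, x₃} : Set (R × C × L)) = {(r1, c2, l3), (r2, c3, l1), (r3, c1, l2)} ∧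
      Y = {(r2, c1, l3), (r3, c2, l1), (r1, c3, l2)} :=
  ⟨x₁.1, x₂.1, x₃.1, x₃.2.1, x₁.2.1, x₂.2.1, x₂.2.2, x₃.2.2, x₁.2.2,
    h₁₂.1, h₁₃.1, h₂₃.1, h₁₃.2.1.symm, h₂₃.2.1.symm, h₁₂.2.1,
    h₂₃.2.2, h₁₂.2.2.symm, h₁₃.2.2.symm, rfl, hY⟩

end

theorem stmt0_general {R C L : Type*}
    (x x' x'' y y' y'' : R × C × L)
    (hdist : ([x, x', x'', y, y', y''] : List (R × C × L)).Nodup) :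
    ((∀ u ∈ ({x, x', x''} : Set (R × C × L)), ∀ v ∈ ({y, y', y''} : Set (R × C × L)), LSAdj u v) ∧
      (∀ u ∈ ({x, x', x''} : Set (R × C × L)), ∀ v ∈ ({x, x', x''} : Set (R × C × L)),
        u ≠ v → ¬ LSAdj u v) ∧
      (∀ u ∈ ({y, y', y''} : Set (R × C × L)), ∀ v ∈ ({y, y', y''} : Set (R × C × L)),
        u ≠ v → ¬ LSAdj u v)) ↔
    (∃ r1 r2 r3 : R, ∃ c1 c2 c3 : C, ∃ l1 l2 l3 : L,
      r1 ≠ r2 ∧ r1 ≠ r3 ∧ r2 ≠ r3 ∧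
      c1 ≠ c2 ∧ c1 ≠ c3 ∧ c2 ≠ c3 ∧
      l1 ≠ l2 ∧ l1 ≠ l3 ∧ l2 ≠ l3 ∧
      ({x, x', x''} : Set (R × C × L)) = {(r1, c2, l3), (r2, c3, l1), (r3, c1, l2)} ∧
      ({y, y', y''} : Set (R × C × L)) = {(r2, c1, l3), (r3, c2, l1), (r1, c3, l2)}) := by
  simp only [List.nodup_cons, List.mem_cons, List.not_mem_nil, or_false, not_or,
    List.nodup_nil, not_false_eq_true, and_true] at hdist
  obtain ⟨⟨hxx', hxx'', -⟩, ⟨hx'x'', -⟩, -, ⟨hyy', hyy''⟩, hy'y''⟩ := hdist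
  constructor
  · intro hK
    have hX := pairwise_not_lsAdj_iff.1 hK.2.1
    have h₁₂ : Apart x x' := hX (by simp) (by simp) hxx'
    have h₁₃ : Apart x x'' := hX (by simp) (by simp) hxx''
    have h₂₃ : Apart x' x'' := hX (by simp) (by simp) hx'x''
    rcases eq_mates_or_eq_mates_swap_of_isInducedK33 hK hxx' hxx'' hx'x'' hyy' hyy'' hy'y''
      with hY | hY
    · exact exists_labelling_of_eq_mates h₁₂ h₁₃ h₂₃ hY
    · rw [Set.pair_comm x' x'']
      exact exists_labelling_of_eq_mates h₁₃ h₁₂ h₂₃.symm hY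
  · rintro ⟨r1, r2, r3, c1, c2, c3, l1, l2, l3, hr12, hr13, hr23, hc12, hc13, hc23,
      hl12, hl13, hl23, hX, hY⟩
    rw [hX, hY]
    exact isInducedK33_mates ⟨hr12, hc23, hl13.symm⟩ ⟨hr13, hc12.symm, hl23.symm⟩
      ⟨hr23, hc13.symm, hl12⟩

theorem stmt0 {R C L : Type*} (S : Set (R × C × L)) (hS : IsLatinSquare S)
    (x x' x'' y y' y'' : R × C × L)
    (hx : x ∈ S) (hx' : x' ∈ S) (hx'' : x'' ∈ S)
    (hy : y ∈ S) (hy' : y' ∈ S) (hy'' : y'' ∈ S)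
    (hdist : ([x, x', x'', y, y', y''] : List (R × C × L)).Nodup) :
    ((∀ u ∈ ({x, x', x''} : Set (R × C × L)), ∀ v ∈ ({y, y', y''} : Set (R × C × L)), LSAdj u v) ∧
      (∀ u ∈ ({x, x', x''} : Set (R × C × L)), ∀ v ∈ ({x, x', x''} : Set (R × C × L)),
        u ≠ v → ¬ LSAdj u v) ∧
      (∀ u ∈ ({y, y', y''} : Set (R × C × L)), ∀ v ∈ ({y, y', y''} : Set (R × C × L)),
        u ≠ v → ¬ LSAdj u v)) ↔
    (∃ r1 r2 r3 : R, ∃ c1 c2 c3 : C, ∃ l1 l2 l3 : L,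
      r1 ≠ r2 ∧ r1 ≠ r3 ∧ r2 ≠ r3 ∧
      c1 ≠ c2 ∧ c1 ≠ c3 ∧ c2 ≠ c3 ∧
      l1 ≠ l2 ∧ l1 ≠ l3 ∧ l2 ≠ l3 ∧
      ({x, x', x''} : Set (R × C × L)) = {(r1, c2, l3), (r2, c3, l1), (r3, c1, l2)} ∧
      ({y, y', y''} : Set (R × C × L)) = {(r2, c1, l3), (r3, c2, l1), (r1, c3, l2)}) :=
  stmt0_general x x' x'' y y' y'' hdist
end

section
/- For any finite group G of order at least 3, the Cayley table latin square S = {(r,c,r·c) : r,c ∈ G} is not K_{3,3}-free; that is, the latin square graph Γ(S) contains an induced subgraph isomorphic to K_{3,3}. -/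
/-- The Cayley table of a group, as a set of triples. -/
def CayleyTable (G : Type*) [Group G] : Set (G × G × G) :=
  {t | t.2.2 = t.1 * t.2.1}

/-- The latin square graph of the Cayley table: distinct triples are adjacent iff they
agree in at least one coordinate. -/
def CayleyGraph (G : Type*) [Group G] : SimpleGraph (CayleyTable G) :=
  SimpleGraph.fromRel (fun u v =>
    (u : G × G × G).1 = (v : G × G × G).1 ∨ (u : G × G × G).2.1 = (v : G × G × G).2.1 ∨
      (u : G × G × G).2.2 = (v : G × G × G).2.2)

/-!
Place three rows `r`, three columns `c` and three symbols `s` of the table, each indexed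
by `Fin 3`, so that the cells `(r i, c i, s i)` and `(r i, c (i + 1), s (i + 2))` lie in the
table. Cells on the same side differ in all coordinates, while a left cell `i` and a right
cell `j` share the row, the column or the symbol according as `i - j` is `0`, `1` or `2`;
hence the six cells induce `K₃,₃`. For commuting `x, y` with `x, y, xy ≠ 1` take
`r = (1, x, xy)`, `c = (1, y, x⁻¹)`, `s = (1, xy, y)`. Such a pair exists once `|G| ≥ 3`:
take `y = x` if `x² ≠ 1`, and otherwise `G` has exponent two and is abelian.
-/

open Function SimpleGraph

theorem Matrix.injective_vecCons_three {α : Type*} {a b c : α} (hab : a ≠ b) (hac : a ≠ c)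
    (hbc : b ≠ c) : Injective ![a, b, c] := by
  intro i j
  fin_cases i <;> fin_cases j <;> simp [hab, hac, hbc, hab.symm, hac.symm, hbc.symm]

section

variable {G : Type*} [Group G]

theorem exists_commute_ne_one_of_three_le_card [Fintype G] (h : 3 ≤ Fintype.card G) :
    ∃ x y : G, Commute x y ∧ x ≠ 1 ∧ y ≠ 1 ∧ x * y ≠ 1 := by
  by_cases hsq : ∃ x : G, x ^ 2 ≠ 1
  · obtain ⟨x, hx⟩ := hsq
    have hx1 : x ≠ 1 := by rintro rfl; simp at hx
    exact ⟨x, x, .refl x, hx1, hx1, by rwa [← pow_two]⟩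
  · push Not at hsq
    obtain ⟨a, b, c, hab, hac, hbc⟩ := Fintype.two_lt_card_iff.mp h
    refine ⟨a⁻¹ * b, a⁻¹ * c, .of_orderOf_dvd_two (fun g => orderOf_dvd_of_pow_eq_one (hsq g)) _ _,
      by simpa [inv_mul_eq_one] using hab, by simpa [inv_mul_eq_one] using hac, fun hxy => hbc ?_⟩
    have hb := hsq (a⁻¹ * b)
    rw [pow_two, ← hxy] at hb
    simpa using hb

theorem cayleyGraph_adj_iff {u v : CayleyTable G} :
    (CayleyGraph G).Adj u v ↔ (u : G × G × G) ≠ v ∧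
      ((u : G × G × G).1 = (v : G × G × G).1 ∨ (u : G × G × G).2.1 = (v : G × G × G).2.1 ∨
        (u : G × G × G).2.2 = (v : G × G × G).2.2) := by
  rw [CayleyGraph, SimpleGraph.fromRel_adj, ne_eq, ← Subtype.coe_inj, ne_eq]
  constructor
  · rintro ⟨hne, h | h⟩
    · exact ⟨hne, h⟩
    · exact ⟨hne, by rcases h with h | h | h <;> simp [h]⟩
  · exact fun ⟨hne, h⟩ => ⟨hne, .inl h⟩

theorem completeBipartiteGraph_isIndContained_cayleyGraph {r c s : Fin 3 → G}
    (hr : Injective r) (hc : Injective c) (hs : Injective s)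
    (hleft : ∀ i, r i * c i = s i) (hright : ∀ i, r i * c (i + 1) = s (i + 2)) :
    completeBipartiteGraph (Fin 3) (Fin 3) ⊴ CayleyGraph G := by
  let f : Fin 3 ⊕ Fin 3 → CayleyTable G :=
    Sum.elim (fun i => ⟨(r i, c i, s i), (hleft i).symm⟩)
      (fun i => ⟨(r i, c (i + 1), s (i + 2)), (hright i).symm⟩)
  have hf : Injective f := by
    rintro (i | i) (j | j) h <;>
      simp only [f, Sum.elim_inl, Sum.elim_inr, Subtype.ext_iff, Prod.mk.injEq, hr.eq_iff,
        hc.eq_iff, hs.eq_iff] at h ⊢ <;> revert i j <;> decide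
  refine ⟨⟨⟨f, hf⟩, ?_⟩⟩
  rintro (i | i) (j | j) <;>
    simp only [f, Embedding.coeFn_mk, Sum.elim_inl, Sum.elim_inr, cayleyGraph_adj_iff, ne_eq,
      Prod.mk.injEq, hr.eq_iff, hc.eq_iff, hs.eq_iff, completeBipartiteGraph_adj] <;>
    revert i j <;> decide

theorem completeBipartiteGraph_isIndContained_cayleyGraph_of_commute {x y : G}
    (hxy : Commute x y) (hx : x ≠ 1) (hy : y ≠ 1) (hxy1 : x * y ≠ 1) :
    completeBipartiteGraph (Fin 3) (Fin 3) ⊴ CayleyGraph G := by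
  refine completeBipartiteGraph_isIndContained_cayleyGraph (r := ![1, x, x * y])
    (c := ![1, y, x⁻¹]) (s := ![1, x * y, y]) ?_ ?_ ?_ ?_ ?_
  · exact Matrix.injective_vecCons_three hx.symm (by simpa [eq_comm] using hxy1)
      (by simpa using hy)
  · exact Matrix.injective_vecCons_three hy.symm (by simpa [eq_comm] using hx)
      (by rwa [ne_eq, eq_inv_iff_mul_eq_one, ← hxy.eq])
  · exact Matrix.injective_vecCons_three hxy1.symm hy.symm (by simpa using hx)
  · intro i
    fin_cases i <;> simp [hxy.mul_inv_cancel]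
  · intro i
    fin_cases i <;> simp

end

theorem stmt2 (G : Type*) [Group G] [Fintype G] (h : 3 ≤ Fintype.card G) :
    ∃ s : Set (CayleyTable G),
      Nonempty ((CayleyGraph G).induce s ≃g completeBipartiteGraph (Fin 3) (Fin 3)) := by
  obtain ⟨x, y, hxy, hx, hy, hxy1⟩ := exists_commute_ne_one_of_three_le_card h
  obtain ⟨s, ⟨e⟩⟩ := isIndContained_iff_exists_iso_induce.mp
    (completeBipartiteGraph_isIndContained_cayleyGraph_of_commute hxy hx hy hxy1)
  exact ⟨s, ⟨e.symm⟩⟩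
end

section
/- A latin square S has a transversal trade of volume 3 if and only if its latin square graph Γ(S) contains an induced subgraph isomorphic to K_{3,3}. -/
/-!
View a cell `(r, c)` of a latin square as the triple `(r, c, L r c)`: any two of its three
coordinates determine it, and two cells are adjacent in the latin square graph iff they share a
coordinate. If `(P, Q)` is a trade with `#P = 3`, counting fibres shows that no two cells of `P`
(or of `Q`) share a coordinate, while a cell of `P` sharing nothing with a cell of `Q` would force
four cells into `Q`; so `P ∪ Q` induces `K₃,₃`. Conversely, in an induced `K₃,₃` with sides `P`
and `Q`, a cell of `Q` agrees with each of the three cells of `P` in some coordinate, and by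
pigeonhole (the cells of `P` being pairwise independent) each of its coordinates already occurs
in `P`; hence `P` and `Q` have the same rows, columns and letters, each exactly once.
-/

/-- A latin square of order `n` as a function: each row and each column is injective. -/
def IsLatin {n : ℕ} (L : Fin n → Fin n → Fin n) : Prop :=
  (∀ r, Function.Injective (L r)) ∧ (∀ c, Function.Injective (fun r => L r c))

/-- A transversal trade: nonempty disjoint sets of cells meeting every row, column
and letter clique in equally many elements. -/
def IsTransversalTrade {n : ℕ} (L : Fin n → Fin n → Fin n)
    (Tp Tm : Finset (Fin n × Fin n)) : Prop :=
  Tp.Nonempty ∧ Tm.Nonempty ∧ Disjoint Tp Tm ∧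
    (∀ r : Fin n, (Tp.filter (fun p => p.1 = r)).card = (Tm.filter (fun p => p.1 = r)).card) ∧
    (∀ c : Fin n, (Tp.filter (fun p => p.2 = c)).card = (Tm.filter (fun p => p.2 = c)).card) ∧
    (∀ l : Fin n, (Tp.filter (fun p => L p.1 p.2 = l)).card =
      (Tm.filter (fun p => L p.1 p.2 = l)).card)

/-- The latin square graph on cells: distinct cells adjacent iff same row, column or letter. -/
def LSGraph {n : ℕ} (L : Fin n → Fin n → Fin n) : SimpleGraph (Fin n × Fin n) :=
  SimpleGraph.fromRel (fun u v => u.1 = v.1 ∨ u.2 = v.2 ∨ L u.1 u.2 = L v.1 v.2)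

open Finset

theorem Finset.card_filter_eq_card_filter_image {α β : Type*} [DecidableEq β] {f : α → β}
    {s : Finset α} (hf : Set.InjOn f s) (b : β) :
    #{x ∈ s | f x = b} = #{y ∈ s.image f | y = b} := by
  rw [filter_image, card_image_of_injOn (hf.mono (filter_subset _ _))]

namespace SimpleGraph

variable {V : Type*} {G : SimpleGraph V}

theorem isIndContained_iff_exists_induce_iso {W : Type*} {H : SimpleGraph W} :
    H ⊴ G ↔ ∃ s : Set V, Nonempty (G.induce s ≃g H) := by
  rw [isIndContained_iff_exists_iso_induce]
  exact exists_congr fun _ => ⟨fun ⟨e⟩ => ⟨e.symm⟩, fun ⟨e⟩ => ⟨e.symm⟩⟩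

theorem completeBipartiteGraph_isIndContained_iff {α β : Type*} [Fintype α] [Fintype β] :
    completeBipartiteGraph α β ⊴ G ↔
      ∃ left right : Finset V, #left = Fintype.card α ∧ #right = Fintype.card β ∧
        G.IsIndepSet left ∧ G.IsIndepSet right ∧ G.IsCompleteBetween left right := by
  constructor
  · rintro ⟨f⟩
    refine ⟨univ.map (Function.Embedding.inl.trans f.toEmbedding),
      univ.map (Function.Embedding.inr.trans f.toEmbedding), by simp, by simp, ?_, ?_, ?_⟩
    all_goals simp only [coe_map, coe_univ, Set.image_univ]
    · rintro _ ⟨a, rfl⟩ _ ⟨a', rfl⟩ -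
      simp
    · rintro _ ⟨b, rfl⟩ _ ⟨b', rfl⟩ -
      simp
    · rintro _ ⟨a, rfl⟩ _ ⟨b, rfl⟩
      simp
  · rintro ⟨left, right, hl, hr, hli, hri, hlr⟩
    obtain ⟨eα⟩ : Nonempty (α ≃ left) := Fintype.card_eq.1 (by simp [hl])
    obtain ⟨eβ⟩ : Nonempty (β ≃ right) := Fintype.card_eq.1 (by simp [hr])
    refine isIndContained_iff_exists_comap_eq.2
      ⟨⟨Sum.elim (fun a => eα a) (fun b => eβ b), ?_⟩, ?_⟩
    · exact (Subtype.val_injective.comp eα.injective).sumElim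
        (Subtype.val_injective.comp eβ.injective)
        fun a b => (hlr (eα a).2 (eβ b).2).ne
    · ext (a | b) (a' | b')
      · simpa using fun h => hli (eα a).2 (eα a').2 h.ne h
      · simpa using hlr (eα a).2 (eβ b').2
      · simpa using (hlr (eα a').2 (eβ b).2).symm
      · simpa using fun h => hri (eβ b).2 (eβ b').2 h.ne h

end SimpleGraph

section Coordinates

variable {ι α β : Type*}

def coordGraph (c : ι → α → β) : SimpleGraph α :=
  SimpleGraph.fromRel fun x y => ∃ i, c i x = c i y

@[simp]
theorem coordGraph_adj {c : ι → α → β} {x y : α} :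
    (coordGraph c).Adj x y ↔ x ≠ y ∧ ∃ i, c i x = c i y := by
  simp [coordGraph, eq_comm]

def PairDetermined (c : ι → α → β) : Prop :=
  ∀ ⦃i j⦄, i ≠ j → ∀ ⦃x y⦄, c i x = c i y → c j x = c j y → x = y

theorem injOn_of_isIndepSet_coordGraph {c : ι → α → β} {P : Set α}
    (hP : (coordGraph c).IsIndepSet P) (i : ι) : Set.InjOn (c i) P := fun x hx y hy hxy => by
  by_contra hne
  exact hP hx hy hne (coordGraph_adj.2 ⟨hne, i, hxy⟩)

def FibreBalanced [DecidableEq β] (c : ι → α → β) (P Q : Finset α) : Prop :=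
  ∀ i b, #{x ∈ P | c i x = b} = #{x ∈ Q | c i x = b}

variable [DecidableEq β] {c : ι → α → β} {P Q : Finset α}

theorem FibreBalanced.symm (h : FibreBalanced c P Q) : FibreBalanced c Q P :=
  fun i b => (h i b).symm

theorem FibreBalanced.exists_mem (h : FibreBalanced c P Q) {x : α} (hx : x ∈ P) (i : ι) :
    ∃ y ∈ Q, c i y = c i x := by
  have : 0 < #{y ∈ Q | c i y = c i x} := h i _ ▸ card_pos.2 ⟨x, by simp [hx]⟩
  simpa [Finset.Nonempty] using card_pos.1 this

theorem FibreBalanced.card_eq [Nonempty ι] (h : FibreBalanced c P Q) : #P = #Q := by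
  classical
  let i : ι := Classical.arbitrary ι
  have hmaps : ∀ R ⊆ P ∪ Q, ∀ x ∈ R, c i x ∈ (P ∪ Q).image (c i) :=
    fun R hR x hx => mem_image_of_mem _ (hR hx)
  rw [card_eq_sum_card_fiberwise (hmaps P subset_union_left),
    card_eq_sum_card_fiberwise (hmaps Q subset_union_right)]
  exact sum_congr rfl fun b _ => h i b

theorem FibreBalanced.isIndepSet [Nontrivial ι] (hc : PairDetermined c) (hPQ : Disjoint P Q)
    (h : FibreBalanced c P Q) (hP : #P ≤ 3) : (coordGraph c).IsIndepSet P := by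
  intro a ha a' ha' haa' hadj
  obtain ⟨-, i, hi⟩ := coordGraph_adj.1 hadj
  obtain ⟨j, hji⟩ := exists_ne i
  have hfibre : 1 < #{x ∈ P | c i x = c i a} :=
    one_lt_card.2 ⟨a, by simpa using ha, a', by simpa [hi] using ha', haa'⟩
  obtain ⟨q, hq, q', hq', hqq'⟩ := one_lt_card.1 (h i _ ▸ hfibre)
  simp only [mem_filter] at hq hq'
  -- `q` and `q'` differ in coordinate `j`, and their `j`-values recur in `P` off the `i`-fibre
  obtain ⟨x, hx, hxq⟩ := h.symm.exists_mem hq.1 j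
  obtain ⟨x', hx', hxq'⟩ := h.symm.exists_mem hq'.1 j
  have hout : ∀ y ∈ P, ∀ z ∈ Q, c i z = c i a → c j y = c j z → c i y ≠ c i a :=
    fun y hy z hz hzi hyj hyi =>
      disjoint_left.1 hPQ hy (hc hji.symm (hyi.trans hzi.symm) hyj ▸ hz)
  have hcomplement : 1 < #{x ∈ P | ¬c i x = c i a} := by
    refine one_lt_card.2 ⟨x, by simp [hx, hout x hx q hq.1 hq.2 hxq], x',
      by simp [hx', hout x' hx' q' hq'.1 hq'.2 hxq'], fun hxx' => hqq' ?_⟩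
    exact hc hji.symm (hq.2.trans hq'.2.symm) (hxq.symm.trans (hxx' ▸ hxq'))
  have := card_filter_add_card_filter_not (s := P) (fun x => c i x = c i a)
  omega

theorem FibreBalanced.isCompleteBetween [Fintype ι] (hc : PairDetermined c)
    (hPQ : Disjoint P Q) (h : FibreBalanced c P Q) (hQ : #Q ≤ Fintype.card ι) :
    (coordGraph c).IsCompleteBetween P Q := by
  classical
  intro a ha b hb
  refine coordGraph_adj.2 ⟨fun hab => disjoint_left.1 hPQ ha (hab ▸ hb), ?_⟩
  by_contra! hab
  choose q hqQ hq using fun i => h.exists_mem ha i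
  have hqa : ∀ i, q i ≠ a := fun i hqa => disjoint_left.1 hPQ ha (hqa ▸ hqQ i)
  have hinj : Function.Injective q := fun i j hij => by
    by_contra hne
    exact hqa i (hc hne (hq i) (hij ▸ hq j))
  have hbq : b ∉ univ.image q := by
    simp only [mem_image, mem_univ, true_and, not_exists]
    exact fun i hqb => hab i (hqb ▸ hq i).symm
  have hsub : insert b (univ.image q) ⊆ Q :=
    insert_subset hb (image_subset_iff.2 fun i _ => hqQ i)
  have := card_le_card hsub
  rw [card_insert_of_notMem hbq, card_image_of_injective _ hinj, card_univ] at this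
  omega

theorem mem_image_coord_of_forall_adj [Fintype ι] (hP : Fintype.card ι ≤ #P)
    (hPi : (coordGraph c).IsIndepSet P) {q : α} (hq : ∀ p ∈ P, (coordGraph c).Adj p q)
    (i : ι) : c i q ∈ P.image (c i) := by
  classical
  by_contra hi
  have hshare : ∀ p ∈ P, ∃ j, j ≠ i ∧ c j p = c j q := fun p hp => by
    obtain ⟨-, j, hj⟩ := coordGraph_adj.1 (hq p hp)
    exact ⟨j, by rintro rfl; exact hi (hj ▸ mem_image_of_mem _ hp), hj⟩
  have : Nonempty ι := ⟨i⟩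
  choose! j hji hj using hshare
  have hcard : #(univ.erase i) < #P := by
    rw [card_erase_of_mem (mem_univ i), card_univ]
    have := Fintype.card_pos_iff.2 ⟨i⟩
    omega
  obtain ⟨p, hp, p', hp', hpp', hjj⟩ := exists_ne_map_eq_of_card_lt_of_maps_to hcard
    fun p hp => mem_erase.2 ⟨hji p hp, mem_univ _⟩
  exact hPi hp hp' hpp' (coordGraph_adj.2 ⟨hpp', j p, (hj p hp).trans (hjj ▸ hj p' hp').symm⟩)

theorem fibreBalanced_of_isCompleteBetween [Fintype ι]
    (hP : Fintype.card ι ≤ #P) (hQ : Fintype.card ι ≤ #Q) (hPi : (coordGraph c).IsIndepSet P)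
    (hQi : (coordGraph c).IsIndepSet Q) (hPQ : (coordGraph c).IsCompleteBetween P Q) :
    FibreBalanced c P Q := by
  intro i b
  have himage : P.image (c i) = Q.image (c i) := by
    refine Subset.antisymm (image_subset_iff.2 fun p hp => ?_)
      (image_subset_iff.2 fun q hq => ?_)
    · exact mem_image_coord_of_forall_adj hQ hQi (fun q hq => (hPQ hp hq).symm) i
    · exact mem_image_coord_of_forall_adj hP hPi (fun p hp => hPQ hp hq) i
  rw [card_filter_eq_card_filter_image (injOn_of_isIndepSet_coordGraph hPi i),
    card_filter_eq_card_filter_image (injOn_of_isIndepSet_coordGraph hQi i), himage]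

end Coordinates

section LatinSquare

variable {n : ℕ} {L : Fin n → Fin n → Fin n}

def cellCoord (L : Fin n → Fin n → Fin n) : Fin 3 → Fin n × Fin n → Fin n :=
  ![Prod.fst, Prod.snd, fun p => L p.1 p.2]

theorem IsLatin.pairDetermined (hL : IsLatin L) : PairDetermined (cellCoord L) := by
  intro i j hij x y hi hj
  have row (h1 : x.1 = y.1) (hl : L x.1 x.2 = L y.1 y.2) : x = y :=
    Prod.ext h1 (hL.1 y.1 (h1 ▸ hl))
  have col (h2 : x.2 = y.2) (hl : L x.1 x.2 = L y.1 y.2) : x = y :=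
    Prod.ext (hL.2 y.2 (h2 ▸ hl)) h2
  fin_cases i <;> fin_cases j <;> simp only [ne_eq, not_true_eq_false, cellCoord] at hij hi hj
  exacts [Prod.ext hi hj, row hi hj, Prod.ext hj hi, col hi hj, row hj hi, col hj hi]

theorem isTransversalTrade_iff {P Q : Finset (Fin n × Fin n)} :
    IsTransversalTrade L P Q ↔
      P.Nonempty ∧ Q.Nonempty ∧ Disjoint P Q ∧ FibreBalanced (cellCoord L) P Q := by
  simp only [IsTransversalTrade, FibreBalanced, Fin.forall_fin_succ, IsEmpty.forall_iff, and_true]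
  rfl

theorem lsGraph_eq_coordGraph (L : Fin n → Fin n → Fin n) :
    LSGraph L = coordGraph (cellCoord L) := by
  ext x y
  simp [LSGraph, Fin.exists_fin_succ, cellCoord, eq_comm]

end LatinSquare

theorem stmt4 {n : ℕ} (L : Fin n → Fin n → Fin n) (hL : IsLatin L) :
    (∃ Tp Tm : Finset (Fin n × Fin n), IsTransversalTrade L Tp Tm ∧ Tp.card = 3) ↔
    (∃ s : Set (Fin n × Fin n),
      Nonempty ((LSGraph L).induce s ≃g completeBipartiteGraph (Fin 3) (Fin 3))) := by
  rw [← SimpleGraph.isIndContained_iff_exists_induce_iso,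
    SimpleGraph.completeBipartiteGraph_isIndContained_iff, lsGraph_eq_coordGraph]
  simp only [isTransversalTrade_iff, Fintype.card_fin]
  constructor
  · rintro ⟨P, Q, ⟨-, -, hPQ, hbal⟩, hP⟩
    have hQ : #Q = 3 := hbal.card_eq ▸ hP
    exact ⟨P, Q, hP, hQ, hbal.isIndepSet hL.pairDetermined hPQ hP.le,
      hbal.symm.isIndepSet hL.pairDetermined hPQ.symm hQ.le,
      hbal.isCompleteBetween hL.pairDetermined hPQ (by simp [hQ])⟩
  · rintro ⟨P, Q, hP, hQ, hPi, hQi, hPQ⟩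
    refine ⟨P, Q, ⟨card_pos.1 (by omega), card_pos.1 (by omega), disjoint_coe.1 hPQ.disjoint,
      fibreBalanced_of_isCompleteBetween (by simp [hP]) (by simp [hQ]) hPi hQi hPQ⟩, hP⟩
end

section
/- There is no K_{3,3}-free latin square of order 4; equivalently, every latin square of order 4 contains rows r1,r2,r3, columns c1,c2,c3, and letters l1,l2,l3 such that all six triples (r1,c2,l3), (r2,c3,l1), (r3,c1,l2), (r2,c1,l3), (r3,c2,l1), (r1,c3,l2) belong to the square. -/
open Function

/-- The `K_{3,3}` pattern with the letters `l₁ = L r2 c3`, `l₂ = L r3 c1`, `l₃ = L r1 c2`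
eliminated. -/
def HasK33Pattern {α β γ : Type*} (L : α → β → γ) : Prop :=
  ∃ r1 r2 r3 c1 c2 c3,
    r1 ≠ r2 ∧ r1 ≠ r3 ∧ r2 ≠ r3 ∧
    c1 ≠ c2 ∧ c1 ≠ c3 ∧ c2 ≠ c3 ∧
    L r2 c3 ≠ L r3 c1 ∧ L r2 c3 ≠ L r1 c2 ∧ L r3 c1 ≠ L r1 c2 ∧
    L r2 c1 = L r1 c2 ∧ L r3 c2 = L r2 c3 ∧ L r1 c3 = L r3 c1

instance {α β γ : Type*} [Fintype α] [Fintype β] [DecidableEq α] [DecidableEq β]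
    [DecidableEq γ] : DecidablePred (HasK33Pattern : (α → β → γ) → Prop) :=
  fun L => by unfold HasK33Pattern; infer_instance

theorem HasK33Pattern.of_comp {α β γ δ : Type*} {L : α → β → γ} {σ : γ → δ}
    (hσ : Injective σ) (h : HasK33Pattern fun r c => σ (L r c)) : HasK33Pattern L := by
  obtain ⟨r1, r2, r3, c1, c2, c3, hr12, hr13, hr23, hc12, hc13, hc23,
    hl12, hl13, hl23, e1, e2, e3⟩ := h
  exact ⟨r1, r2, r3, c1, c2, c3, hr12, hr13, hr23, hc12, hc13, hc23,
    ne_of_apply_ne σ hl12, ne_of_apply_ne σ hl13, ne_of_apply_ne σ hl23,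
    hσ e1, hσ e2, hσ e3⟩

namespace IsLatin

variable {n : ℕ} {L : Fin n → Fin n → Fin n}

theorem perm_comp (hL : IsLatin L) (σ : Equiv.Perm (Fin n)) :
    IsLatin fun r c => σ (L r c) :=
  ⟨fun r => σ.injective.comp (hL.1 r), fun c => σ.injective.comp (hL.2 c)⟩

theorem exists_perm_apply_row_eq (hL : IsLatin L) (r : Fin n) :
    ∃ σ : Equiv.Perm (Fin n), ∀ c, σ (L r c) = c :=
  ⟨(Equiv.ofBijective (L r) (Finite.injective_iff_bijective.mp (hL.1 r))).symm,
    Equiv.ofBijective_symm_apply_apply _ _⟩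

theorem apply_ne_of_ne (hL : IsLatin L) {r r' : Fin n} (h : r ≠ r') (c : Fin n) :
    L r c ≠ L r' c :=
  fun e => h (hL.2 c e)

end IsLatin

set_option maxRecDepth 100000 in
theorem hasK33Pattern_of_rows : ∀ g1 : Fin 4 → Fin 4,
    (Injective g1 ∧ ∀ c, g1 c ≠ c) →
    ∀ g2 : Fin 4 → Fin 4,
    (Injective g2 ∧ (∀ c, g2 c ≠ c) ∧ (∀ c, g2 c ≠ g1 c)) →
    ∀ g3 : Fin 4 → Fin 4,
    (Injective g3 ∧ (∀ c, g3 c ≠ c) ∧ (∀ c, g3 c ≠ g1 c) ∧ (∀ c, g3 c ≠ g2 c)) →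
    HasK33Pattern ![id, g1, g2, g3] := by
  decide

theorem IsLatin.hasK33Pattern_of_row_zero {L : Fin 4 → Fin 4 → Fin 4} (hL : IsLatin L)
    (h0 : ∀ c, L 0 c = c) : HasK33Pattern L := by
  have hrows : L = ![id, L 1, L 2, L 3] := by
    funext r c
    fin_cases r
    exacts [h0 c, rfl, rfl, rfl]
  have hder (r : Fin 4) (h : r ≠ 0) (c : Fin 4) : L r c ≠ c :=
    ne_of_ne_of_eq (hL.apply_ne_of_ne h c) (h0 c)
  rw [hrows]
  exact hasK33Pattern_of_rows _ ⟨hL.1 1, hder 1 (by decide)⟩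
    _ ⟨hL.1 2, hder 2 (by decide), hL.apply_ne_of_ne (by decide)⟩
    _ ⟨hL.1 3, hder 3 (by decide), hL.apply_ne_of_ne (by decide),
      hL.apply_ne_of_ne (by decide)⟩

/-- Every latin square of order 4 contains a `K_{3,3}` pattern. -/
theorem stmt7 (L : Fin 4 → Fin 4 → Fin 4) (hL : IsLatin L) :
    ∃ r1 r2 r3 c1 c2 c3 l1 l2 l3 : Fin 4,
      r1 ≠ r2 ∧ r1 ≠ r3 ∧ r2 ≠ r3 ∧
      c1 ≠ c2 ∧ c1 ≠ c3 ∧ c2 ≠ c3 ∧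
      l1 ≠ l2 ∧ l1 ≠ l3 ∧ l2 ≠ l3 ∧
      L r1 c2 = l3 ∧ L r2 c3 = l1 ∧ L r3 c1 = l2 ∧
      L r2 c1 = l3 ∧ L r3 c2 = l1 ∧ L r1 c3 = l2 := by
  obtain ⟨σ, hσ⟩ := hL.exists_perm_apply_row_eq 0
  obtain ⟨r1, r2, r3, c1, c2, c3, hr12, hr13, hr23, hc12, hc13, hc23,
    hl12, hl13, hl23, e1, e2, e3⟩ :=
    ((hL.perm_comp σ).hasK33Pattern_of_row_zero hσ).of_comp σ.injective
  exact ⟨r1, r2, r3, c1, c2, c3, L r2 c3, L r3 c1, L r1 c2, hr12, hr13, hr23,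
    hc12, hc13, hc23, hl12, hl13, hl23, rfl, rfl, rfl, e1, e2, e3⟩
end

section
/- For any latin square S of order n and any function f : S → ℝ that is an eigenfunction of the latin square graph Γ(S) with eigenvalue -3, if f has exactly 6 nonzero values, then the 6 cells where f is nonzero induce a subgraph of Γ(S) isomorphic to K_{3,3}. -/
open Finset


private lemma fiber_two_le {V K : Type*} [DecidableEq V] [DecidableEq K]
    (S : Finset V) (f : V → ℝ) (hf : ∀ x ∈ S, f x ≠ 0) (g : V → K)
    (hg : ∀ y ∈ S, ∑ z ∈ S.filter (fun z => g z = g y), f z = 0)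
    {y : V} (hy : y ∈ S) : 2 ≤ (S.filter (fun z => g z = g y)).card := by
  set F := S.filter (fun z => g z = g y) with hF
  have hyF : y ∈ F := by simp [hF, hy]
  have h1 : F.card ≠ 1 := by
    intro h
    obtain ⟨z, hz⟩ := Finset.card_eq_one.mp h
    have hyz : y = z := by simpa [hz] using hyF
    have hs := hg y hy
    rw [← hF, hz, Finset.sum_singleton, ← hyz] at hs
    exact hf y hy hs
  have h0 : F.card ≠ 0 := by
    intro h; rw [Finset.card_eq_zero] at h; simp [h] at hyF
  omega

private lemma pair_structure {V K : Type*} [DecidableEq V] [DecidableEq K]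
    (S : Finset V) (f : V → ℝ) (g : V → K)
    {y : V} (hy : y ∈ S) (hsum : ∑ z ∈ S.filter (fun z => g z = g y), f z = 0)
    (hcard : (S.filter (fun z => g z = g y)).card = 2) :
    ∃ z ∈ S, z ≠ y ∧ g z = g y ∧ f z = -f y ∧ ∀ w ∈ S, g w = g y → w = y ∨ w = z := by
  obtain ⟨u, v, huv, hP⟩ := Finset.card_eq_two.mp hcard
  have hyP : y ∈ S.filter (fun z => g z = g y) := by simp [hy]
  have hsum2 : f u + f v = 0 := by rw [hP] at hsum; rwa [Finset.sum_pair huv] at hsum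
  have hmemu : u ∈ S ∧ g u = g y := by
    have : u ∈ S.filter (fun z => g z = g y) := by simp [hP]
    simpa using this
  have hmemv : v ∈ S ∧ g v = g y := by
    have : v ∈ S.filter (fun z => g z = g y) := by simp [hP]
    simpa using this
  have hall : ∀ w ∈ S, g w = g y → w = u ∨ w = v := by
    intro w hw hgw
    have : w ∈ S.filter (fun z => g z = g y) := by simp [hw, hgw]
    rw [hP] at this; simpa using this
  rw [hP] at hyP
  simp only [Finset.mem_insert, Finset.mem_singleton] at hyP
  rcases hyP with rfl | rfl
  · exact ⟨v, hmemv.1, huv.symm, hmemv.2, by linarith, fun w hw hgw => hall w hw hgw⟩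
  · exact ⟨u, hmemu.1, huv, hmemu.2, by linarith, fun w hw hgw => (hall w hw hgw).symm⟩

private lemma pair_opposite {V K : Type*} [DecidableEq V] [DecidableEq K]
    (S : Finset V) (f : V → ℝ) (hf : ∀ x ∈ S, f x ≠ 0) (F : Finset V) (hFsub : F ⊆ S)
    (g : V → K)
    (hg : ∀ y ∈ S, ∑ z ∈ S.filter (fun z => g z = g y), f z = 0)
    (hgF : ∀ y ∈ F, ∀ z ∈ F, g y = g z → y = z)
    (hgF' : ∀ y ∈ S \ F, ∀ z ∈ S \ F, g y = g z → y = z)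
    (y : V) (hyS : y ∈ S) :
    ∃ z ∈ S, z ≠ y ∧ g z = g y ∧ f z = -f y ∧ (y ∈ F ↔ z ∉ F) := by
  classical
  have h2g := fiber_two_le S f hf g hg hyS
  have hcard2 : (S.filter (fun z => g z = g y)).card = 2 := by
    have hsplit := Finset.card_filter_add_card_filter_not
      (s := S.filter (fun z => g z = g y)) (p := fun z => z ∈ F)
    have hle1 : ((S.filter (fun z => g z = g y)).filter (fun z => z ∈ F)).card ≤ 1 := by
      refine Finset.card_le_one.mpr ?_
      intro u hu v hv
      simp only [Finset.mem_filter] at hu hv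
      exact hgF u hu.2 v hv.2 ((hu.1.2).trans (hv.1.2).symm)
    have hle2 : ((S.filter (fun z => g z = g y)).filter (fun z => ¬ z ∈ F)).card ≤ 1 := by
      refine Finset.card_le_one.mpr ?_
      intro u hu v hv
      simp only [Finset.mem_filter] at hu hv
      have huF' : u ∈ S \ F := Finset.mem_sdiff.mpr ⟨hu.1.1, hu.2⟩
      have hvF' : v ∈ S \ F := Finset.mem_sdiff.mpr ⟨hv.1.1, hv.2⟩
      exact hgF' u huF' v hvF' ((hu.1.2).trans (hv.1.2).symm)
    omega
  obtain ⟨z, hzS, hzy, hgz, hfz, _⟩ := pair_structure S f g hyS (hg y hyS) hcard2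
  refine ⟨z, hzS, hzy, hgz, hfz, ?_⟩
  constructor
  · intro hyF hzF
    exact hzy (hgF z hzF y hyF hgz)
  · intro hzF
    by_contra hyF
    have hyF' : y ∈ S \ F := Finset.mem_sdiff.mpr ⟨hyS, hyF⟩
    have hzF' : z ∈ S \ F := Finset.mem_sdiff.mpr ⟨hzS, hzF⟩
    exact hzy (hgF' z hzF' y hyF' hgz)

private lemma fiber_card_eq_two {V K1 K2 K3 : Type*} [DecidableEq V] [DecidableEq K1]
    [DecidableEq K2] [DecidableEq K3]
    (S : Finset V) (hS : S.card = 6) (f : V → ℝ) (hf : ∀ x ∈ S, f x ≠ 0)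
    (a : V → K1) (b : V → K2) (c : V → K3)
    (ha : ∀ x ∈ S, ∑ y ∈ S.filter (fun y => a y = a x), f y = 0)
    (hb : ∀ x ∈ S, ∑ y ∈ S.filter (fun y => b y = b x), f y = 0)
    (hc : ∀ x ∈ S, ∑ y ∈ S.filter (fun y => c y = c x), f y = 0)
    (hab : ∀ x ∈ S, ∀ y ∈ S, a x = a y → b x = b y → x = y)
    (hac : ∀ x ∈ S, ∀ y ∈ S, a x = a y → c x = c y → x = y)
    (hbc : ∀ x ∈ S, ∀ y ∈ S, b x = b y → c x = c y → x = y)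
    {x : V} (hx : x ∈ S) : (S.filter (fun y => a y = a x)).card = 2 := by
  classical
  set F := S.filter (fun y => a y = a x) with hFdef
  have hxF : x ∈ F := by simp [hFdef, hx]
  have hFsub : F ⊆ S := Finset.filter_subset _ _
  have haF : ∀ y ∈ F, a y = a x := fun y hy => (Finset.mem_filter.mp hy).2
  have h2 : 2 ≤ F.card := fiber_two_le S f hf a ha hx
  rcases Nat.lt_or_ge F.card 3 with h3 | h3
  · omega
  exfalso
  set F' := S \ F with hF'def
  have hcardF' : F'.card = 6 - F.card := by rw [hF'def, Finset.card_sdiff_of_subset hFsub, hS]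
  -- injectivity of b and c on F
  have hbF : ∀ y ∈ F, ∀ z ∈ F, b y = b z → y = z := by
    intro y hy z hz hbyz
    exact hab y (hFsub hy) z (hFsub hz) ((haF y hy).trans (haF z hz).symm) hbyz
  have hcF : ∀ y ∈ F, ∀ z ∈ F, c y = c z → y = z := by
    intro y hy z hz hcyz
    exact hac y (hFsub hy) z (hFsub hz) ((haF y hy).trans (haF z hz).symm) hcyz
  -- outer partner for b
  have houtb : ∀ y ∈ F, ∃ z ∈ F', b z = b y := by
    intro y hy
    have hyS := hFsub hy
    have h2b := fiber_two_le S f hf b hb hyS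
    have hyP : y ∈ S.filter (fun z => b z = b y) := by simp [hyS]
    have : ((S.filter (fun z => b z = b y)).erase y).Nonempty := by
      rw [← Finset.card_pos, Finset.card_erase_of_mem hyP]; omega
    obtain ⟨z, hz⟩ := this
    have hzy : z ≠ y := Finset.ne_of_mem_erase hz
    have hzP := Finset.mem_of_mem_erase hz
    have hzS : z ∈ S := (Finset.mem_filter.mp hzP).1
    have hbz : b z = b y := (Finset.mem_filter.mp hzP).2
    refine ⟨z, ?_, hbz⟩
    rw [hF'def, Finset.mem_sdiff]
    refine ⟨hzS, fun hzF => hzy (hbF z hzF y hy hbz)⟩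
  have houtc : ∀ y ∈ F, ∃ z ∈ F', c z = c y := by
    intro y hy
    have hyS := hFsub hy
    have h2c := fiber_two_le S f hf c hc hyS
    have hyP : y ∈ S.filter (fun z => c z = c y) := by simp [hyS]
    have : ((S.filter (fun z => c z = c y)).erase y).Nonempty := by
      rw [← Finset.card_pos, Finset.card_erase_of_mem hyP]; omega
    obtain ⟨z, hz⟩ := this
    have hzy : z ≠ y := Finset.ne_of_mem_erase hz
    have hzP := Finset.mem_of_mem_erase hz
    have hzS : z ∈ S := (Finset.mem_filter.mp hzP).1
    have hcz : c z = c y := (Finset.mem_filter.mp hzP).2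
    refine ⟨z, ?_, hcz⟩
    rw [hF'def, Finset.mem_sdiff]
    refine ⟨hzS, fun hzF => hzy (hcF z hzF y hy hcz)⟩
  -- image inclusions
  have himb : F.image b ⊆ F'.image b := by
    intro k hk
    obtain ⟨y, hy, rfl⟩ := Finset.mem_image.mp hk
    obtain ⟨z, hz, hbz⟩ := houtb y hy
    exact Finset.mem_image.mpr ⟨z, hz, hbz⟩
  have himc : F.image c ⊆ F'.image c := by
    intro k hk
    obtain ⟨y, hy, rfl⟩ := Finset.mem_image.mp hk
    obtain ⟨z, hz, hcz⟩ := houtc y hy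
    exact Finset.mem_image.mpr ⟨z, hz, hcz⟩
  have hbinjF : Set.InjOn b ↑F := by
    intro y hy z hz h; exact hbF y hy z hz h
  have hcinjF : Set.InjOn c ↑F := by
    intro y hy z hz h; exact hcF y hy z hz h
  have hcardle : F.card ≤ F'.card := by
    calc F.card = (F.image b).card := (Finset.card_image_of_injOn hbinjF).symm
      _ ≤ (F'.image b).card := Finset.card_le_card himb
      _ ≤ F'.card := Finset.card_image_le
  have hF3 : F.card = 3 := by omega
  have hF'3 : F'.card = 3 := by omega
  -- injectivity on F'
  have hbinjF' : ∀ y ∈ F', ∀ z ∈ F', b y = b z → y = z := by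
    have h1 : (F'.image b).card = F'.card := by
      have : 3 ≤ (F'.image b).card := by
        calc 3 = (F.image b).card := by rw [Finset.card_image_of_injOn hbinjF, hF3]
          _ ≤ (F'.image b).card := Finset.card_le_card himb
      have h2' : (F'.image b).card ≤ 3 := hF'3 ▸ Finset.card_image_le
      omega
    have := Finset.card_image_iff.mp h1
    intro y hy z hz h; exact this (by exact hy) (by exact hz) h
  have hcinjF' : ∀ y ∈ F', ∀ z ∈ F', c y = c z → y = z := by
    have h1 : (F'.image c).card = F'.card := by
      have : 3 ≤ (F'.image c).card := by
        calc 3 = (F.image c).card := by rw [Finset.card_image_of_injOn hcinjF, hF3]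
          _ ≤ (F'.image c).card := Finset.card_le_card himc
      have h2' : (F'.image c).card ≤ 3 := hF'3 ▸ Finset.card_image_le
      omega
    have := Finset.card_image_iff.mp h1
    intro y hy z hz h; exact this (by exact hy) (by exact hz) h
  -- chain: every y in F has a distinct partner in F with the same value
  have chain : ∀ y ∈ F, ∃ w ∈ F, w ≠ y ∧ f w = f y := by
    intro y hyF
    have hyS := hFsub hyF
    obtain ⟨z, hzS, hzy, hcz, hfz, hziff⟩ := pair_opposite S f hf F hFsub c hc hcF (by rwa [← hF'def]) y hyS
    have hzF : z ∉ F := hziff.mp hyF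
    obtain ⟨w, hwS, hwz, hbw, hfw, hwiff⟩ := pair_opposite S f hf F hFsub b hb hbF (by rwa [← hF'def]) z hzS
    have hwF : w ∈ F := by
      by_contra hwF
      have hzF2 : z ∈ F := hwiff.mpr hwF
      exact hzF hzF2
    refine ⟨w, hwF, ?_, by rw [hfw, hfz]; ring⟩
    intro hwy
    subst hwy
    exact hzy (hbc z hzS w hwS hbw.symm hcz)
  -- conclude f constant on F, contradiction with sum = 0
  obtain ⟨u, v, w, huv, huw, hvw, hFuvw⟩ := Finset.card_eq_three.mp hF3
  have memu : u ∈ F := by simp [hFuvw]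
  have memv : v ∈ F := by simp [hFuvw]
  have memw : w ∈ F := by simp [hFuvw]
  have hconst : f u = f v ∧ f v = f w := by
    obtain ⟨pu, hpuF, hpuu, hfpu⟩ := chain u memu
    obtain ⟨pv, hpvF, hpvv, hfpv⟩ := chain v memv
    obtain ⟨pw, hpwF, hpww, hfpw⟩ := chain w memw
    rw [hFuvw] at hpuF hpvF hpwF
    simp only [Finset.mem_insert, Finset.mem_singleton] at hpuF hpvF hpwF
    rcases hpuF with rfl | rfl | rfl <;> rcases hpvF with rfl | rfl | rfl <;>
      rcases hpwF with rfl | rfl | rfl <;> first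
        | (exact absurd rfl hpuu) | (exact absurd rfl hpvv) | (exact absurd rfl hpww)
        | (constructor <;> linarith)
  have hsumF : f u + f v + f w = 0 := by
    have := ha x hx
    rw [← hFdef, hFuvw] at this
    rw [Finset.sum_insert (by simp [huv, huw]), Finset.sum_insert (by simp [hvw]),
      Finset.sum_singleton] at this
    linarith
  have : f u = 0 := by rcases hconst with ⟨h1, h2⟩; linarith
  exact hf u (hFsub memu) this

open scoped Classical in
private theorem sums_zero {n : ℕ} (L : Fin n → Fin n → Fin n) (hL : IsLatin L)
    (f : Fin n × Fin n → ℝ)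
    (heig : ∀ x, ∑ y ∈ Finset.univ.filter (fun y => (LSGraph L).Adj x y), f y = -3 * f x)
    (hn : 0 < n) :
    (∀ r, ∑ y ∈ Finset.univ.filter (fun y : Fin n × Fin n => y.1 = r), f y = 0) ∧
    (∀ c, ∑ y ∈ Finset.univ.filter (fun y : Fin n × Fin n => y.2 = c), f y = 0) ∧
    (∀ t, ∑ y ∈ Finset.univ.filter (fun y : Fin n × Fin n => L y.1 y.2 = t), f y = 0) := by
  classical
  set R : Fin n → ℝ := fun r => ∑ y ∈ Finset.univ.filter (fun y : Fin n × Fin n => y.1 = r), f y with hR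
  set C : Fin n → ℝ := fun c => ∑ y ∈ Finset.univ.filter (fun y : Fin n × Fin n => y.2 = c), f y with hC
  set T : Fin n → ℝ := fun t => ∑ y ∈ Finset.univ.filter (fun y : Fin n × Fin n => L y.1 y.2 = t), f y with hT
  have adj_iff : ∀ x y : Fin n × Fin n, (LSGraph L).Adj x y ↔
      y ≠ x ∧ (y.1 = x.1 ∨ y.2 = x.2 ∨ L y.1 y.2 = L x.1 x.2) := by
    intro x y
    constructor
    · rintro ⟨hne, h | h⟩
      · exact ⟨Ne.symm hne, by tauto⟩
      · exact ⟨Ne.symm hne, by tauto⟩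
    · rintro ⟨hne, h⟩
      exact ⟨Ne.symm hne, Or.inr (by tauto)⟩
  -- step A
  have stepA : ∀ x : Fin n × Fin n, R x.1 + C x.2 + T (L x.1 x.2) = 0 := by
    intro x
    have h := heig x
    have hdecomp : ∑ y ∈ Finset.univ.filter (fun y => (LSGraph L).Adj x y), f y
        = R x.1 + C x.2 + T (L x.1 x.2) - 3 * f x := by
      rw [Finset.sum_filter, hR, hC, hT]
      simp only
      rw [Finset.sum_filter, Finset.sum_filter, Finset.sum_filter]
      have key : ∀ y : Fin n × Fin n,
          (if (LSGraph L).Adj x y then f y else 0)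
          = ((if y.1 = x.1 then f y else 0) + (if y.2 = x.2 then f y else 0)
            + (if L y.1 y.2 = L x.1 x.2 then f y else 0)) - (if y = x then 3 * f y else 0) := by
        intro y
        by_cases hyx : y = x
        · subst hyx
          rw [if_neg ((LSGraph L).irrefl)]
          simp; ring
        · rw [if_neg hyx]
          by_cases h1 : y.1 = x.1 <;> by_cases h2 : y.2 = x.2 <;>
            by_cases h3 : L y.1 y.2 = L x.1 x.2
          · exact absurd (Prod.ext h1 h2) hyx
          · exact absurd (Prod.ext h1 h2) hyx
          · -- h1, ¬h2, h3 : row injective contradiction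
            exfalso
            rw [h1] at h3
            exact h2 (hL.1 x.1 h3)
          · rw [if_pos ((adj_iff x y).mpr ⟨hyx, by tauto⟩), if_pos h1, if_neg h2, if_neg h3]
            ring
          · -- ¬h1, h2, h3 : column injective contradiction
            exfalso
            rw [h2] at h3
            exact h1 (hL.2 x.2 h3)
          · rw [if_pos ((adj_iff x y).mpr ⟨hyx, by tauto⟩), if_neg h1, if_pos h2, if_neg h3]
            ring
          · rw [if_pos ((adj_iff x y).mpr ⟨hyx, by tauto⟩), if_neg h1, if_neg h2, if_pos h3]
            ring
          · rw [if_neg (by rw [adj_iff]; tauto), if_neg h1, if_neg h2, if_neg h3]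
            ring
      rw [Finset.sum_congr rfl (fun y _ => key y)]
      rw [Finset.sum_sub_distrib, Finset.sum_add_distrib, Finset.sum_add_distrib]
      rw [Finset.sum_ite_eq' Finset.univ x (fun y => 3 * f y)]
      simp
    rw [hdecomp] at h
    linarith
  -- step B
  have hnR : (n : ℝ) ≠ 0 := Nat.cast_ne_zero.mpr hn.ne'
  set s := ∑ y : Fin n × Fin n, f y with hs
  have hRtot : ∑ r, R r = s := by rw [Finset.sum_fiberwise]
  have hCtot : ∑ c, C c = s := by rw [Finset.sum_fiberwise]
  have hTtot : ∑ t, T t = s := by rw [Finset.sum_fiberwise]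
  have hcardn : (Finset.univ : Finset (Fin n)).card = n := Finset.card_univ.trans (Fintype.card_fin n)
  have hRconst : ∀ r, (n : ℝ) * R r + 2 * s = 0 := by
    intro r
    have hsum : ∑ c, (R r + C c + T (L r c)) = 0 := by
      rw [Finset.sum_congr rfl (fun c _ => stepA (r, c))]
      simp
    rw [Finset.sum_add_distrib, Finset.sum_add_distrib] at hsum
    have h1 : ∑ _c : Fin n, R r = (n : ℝ) * R r := by
      rw [Finset.sum_const, hcardn, nsmul_eq_mul]
    have h3 : ∑ c, T (L r c) = ∑ t, T t :=
      Fintype.sum_bijective (L r) (Finite.injective_iff_bijective.mp (hL.1 r)) _ _ (fun c => rfl)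
    rw [h1, hCtot, h3, hTtot] at hsum
    linarith
  have hCconst : ∀ c, (n : ℝ) * C c + 2 * s = 0 := by
    intro c
    have hsum : ∑ r, (R r + C c + T (L r c)) = 0 := by
      rw [Finset.sum_congr rfl (fun r _ => stepA (r, c))]
      simp
    rw [Finset.sum_add_distrib, Finset.sum_add_distrib] at hsum
    have h1 : ∑ _r : Fin n, C c = (n : ℝ) * C c := by
      rw [Finset.sum_const, hcardn, nsmul_eq_mul]
    have h3 : ∑ r, T (L r c) = ∑ t, T t :=
      Fintype.sum_bijective (fun r => L r c) (Finite.injective_iff_bijective.mp (hL.2 c)) _ _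
        (fun r => rfl)
    rw [h1, hRtot, h3, hTtot] at hsum
    linarith
  have hTconst : ∀ t, (n : ℝ) * T t + 2 * s = 0 := by
    intro t
    have hbijr : ∀ r, Function.Bijective (L r) :=
      fun r => Finite.injective_iff_bijective.mp (hL.1 r)
    set e : Fin n → Fin n := fun r => (Equiv.ofBijective (L r) (hbijr r)).symm t with he
    have hLe : ∀ r, L r (e r) = t := fun r => (Equiv.ofBijective (L r) (hbijr r)).apply_symm_apply t
    have hebij : Function.Bijective e := by
      apply Finite.injective_iff_bijective.mp
      intro r1 r2 h
      apply hL.2 (e r1)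
      show L r1 (e r1) = L r2 (e r1)
      rw [hLe r1]
      conv_rhs => rw [h]
      rw [hLe r2]
    have hzero : ∀ r : Fin n, R r + C (e r) + T t = 0 := by
      intro r
      have h := stepA (r, e r)
      rwa [hLe r] at h
    have hsum : ∑ r, (R r + C (e r) + T t) = 0 := by
      rw [Finset.sum_congr rfl (fun r _ => hzero r)]
      simp
    rw [Finset.sum_add_distrib, Finset.sum_add_distrib] at hsum
    have h1 : ∑ _r : Fin n, T t = (n : ℝ) * T t := by
      rw [Finset.sum_const, hcardn, nsmul_eq_mul]
    have h2 : ∑ r, C (e r) = ∑ c, C c := Fintype.sum_bijective e hebij _ _ (fun r => rfl)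
    rw [h1, hRtot, h2, hCtot] at hsum
    linarith
  have hs0 : s = 0 := by
    obtain ⟨r0⟩ : Nonempty (Fin n) := ⟨⟨0, hn⟩⟩
    have h := stepA (r0, r0)
    have h2 : (n : ℝ) * (R r0 + C r0 + T (L r0 r0)) = 0 := by rw [h]; ring
    have hr := hRconst r0
    have hc := hCconst r0
    have ht := hTconst (L r0 r0)
    have h3 : -6 * s = 0 := by
      have hexp : (n:ℝ) * R r0 + (n:ℝ) * C r0 + (n:ℝ) * T (L r0 r0) = 0 := by
        rw [← mul_add, ← mul_add, h]; ring
      linarith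
    linarith
  refine ⟨fun r => ?_, fun c => ?_, fun t => ?_⟩
  · have := hRconst r; rw [hs0] at this
    have h2 : (n : ℝ) * R r = 0 := by linarith
    exact (mul_eq_zero.mp h2).resolve_left hnR
  · have := hCconst c; rw [hs0] at this
    have h2 : (n : ℝ) * C c = 0 := by linarith
    exact (mul_eq_zero.mp h2).resolve_left hnR
  · have := hTconst t; rw [hs0] at this
    have h2 : (n : ℝ) * T t = 0 := by linarith
    exact (mul_eq_zero.mp h2).resolve_left hnR


open scoped Classical in
/-- If an eigenfunction of a latin square graph for eigenvalue `-3` has exactly 6 nonzeros,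
then the nonzeros induce a subgraph isomorphic to `K_{3,3}`. -/
theorem stmt14 {n : ℕ} (L : Fin n → Fin n → Fin n) (hL : IsLatin L)
    (f : Fin n × Fin n → ℝ) (hf : f ≠ 0)
    (heig : ∀ x, ∑ y ∈ Finset.univ.filter (fun y => (LSGraph L).Adj x y), f y = -3 * f x)
    (hsupp : (Finset.univ.filter (fun x => f x ≠ 0)).card = 6) :
    Nonempty ((LSGraph L).induce {x | f x ≠ 0} ≃g completeBipartiteGraph (Fin 3) (Fin 3)) := by
  classical
  have hn : 0 < n := by
    rcases Nat.eq_zero_or_pos n with h | h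
    · subst h
      rw [show (Finset.univ : Finset (Fin 0 × Fin 0)) = ∅ from rfl] at hsupp
      simp at hsupp
    · exact h
  obtain ⟨hRow, hCol, hLet⟩ := sums_zero L hL f heig hn
  set S : Finset (Fin n × Fin n) := Finset.univ.filter (fun x => f x ≠ 0) with hSdef
  have hcard : S.card = 6 := hsupp
  have hSmem : ∀ x, x ∈ S ↔ f x ≠ 0 := by intro x; simp [hSdef]
  have hSf : ∀ x ∈ S, f x ≠ 0 := fun x hx => (hSmem x).mp hx
  -- restricted sums
  have haS : ∀ x ∈ S, ∑ y ∈ S.filter (fun y => y.1 = x.1), f y = 0 := by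
    intro x _
    rw [Finset.sum_subset (Finset.filter_subset_filter _ (Finset.subset_univ S))
      (fun y hy hyn => by
        by_contra hfy
        exact hyn (Finset.mem_filter.mpr ⟨(hSmem y).mpr hfy, (Finset.mem_filter.mp hy).2⟩))]
    exact hRow x.1
  have hbS : ∀ x ∈ S, ∑ y ∈ S.filter (fun y => y.2 = x.2), f y = 0 := by
    intro x _
    rw [Finset.sum_subset (Finset.filter_subset_filter _ (Finset.subset_univ S))
      (fun y hy hyn => by
        by_contra hfy
        exact hyn (Finset.mem_filter.mpr ⟨(hSmem y).mpr hfy, (Finset.mem_filter.mp hy).2⟩))]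
    exact hCol x.2
  have hcS : ∀ x ∈ S, ∑ y ∈ S.filter (fun y => L y.1 y.2 = L x.1 x.2), f y = 0 := by
    intro x _
    rw [Finset.sum_subset (Finset.filter_subset_filter _ (Finset.subset_univ S))
      (fun y hy hyn => by
        by_contra hfy
        exact hyn (Finset.mem_filter.mpr ⟨(hSmem y).mpr hfy, (Finset.mem_filter.mp hy).2⟩))]
    exact hLet (L x.1 x.2)
  -- pairwise injectivity
  have hab : ∀ x ∈ S, ∀ y ∈ S, x.1 = y.1 → x.2 = y.2 → x = y :=
    fun x _ y _ h1 h2 => Prod.ext h1 h2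
  have hac : ∀ x ∈ S, ∀ y ∈ S, x.1 = y.1 → L x.1 x.2 = L y.1 y.2 → x = y := by
    intro x _ y _ h1 h2
    rw [← h1] at h2
    exact Prod.ext h1 (hL.1 x.1 h2)
  have hbc : ∀ x ∈ S, ∀ y ∈ S, x.2 = y.2 → L x.1 x.2 = L y.1 y.2 → x = y := by
    intro x _ y _ h1 h2
    rw [← h1] at h2
    exact Prod.ext (hL.2 x.2 h2) h1
  -- fiber cardinalities
  have hacard : ∀ x ∈ S, (S.filter (fun y => y.1 = x.1)).card = 2 := by
    intro x hx
    exact fiber_card_eq_two S hcard f hSf (fun y => y.1) (fun y => y.2)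
      (fun y => L y.1 y.2) haS hbS hcS hab hac hbc hx
  have hbcard : ∀ x ∈ S, (S.filter (fun y => y.2 = x.2)).card = 2 := by
    intro x hx
    exact fiber_card_eq_two S hcard f hSf (fun y => y.2) (fun y => y.1)
      (fun y => L y.1 y.2) hbS haS hcS
      (fun x hx y hy h1 h2 => hab x hx y hy h2 h1) hbc hac hx
  have hccard : ∀ x ∈ S, (S.filter (fun y => L y.1 y.2 = L x.1 x.2)).card = 2 := by
    intro x hx
    exact fiber_card_eq_two S hcard f hSf (fun y => L y.1 y.2) (fun y => y.1)
      (fun y => y.2) hcS haS hbS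
      (fun x hx y hy h1 h2 => hac x hx y hy h2 h1)
      (fun x hx y hy h1 h2 => hbc x hx y hy h2 h1) hab hx
  -- mates
  have hmates : ∀ x ∈ S, ∃ zr ∈ S, ∃ zc ∈ S, ∃ zl ∈ S,
      zr ≠ x ∧ zc ≠ x ∧ zl ≠ x ∧ zr ≠ zc ∧ zr ≠ zl ∧ zc ≠ zl ∧
      zr.1 = x.1 ∧ zc.2 = x.2 ∧ L zl.1 zl.2 = L x.1 x.2 ∧
      f zr = -f x ∧ f zc = -f x ∧ f zl = -f x ∧
      (∀ w ∈ S, w.1 = x.1 → w = x ∨ w = zr) ∧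
      (∀ w ∈ S, w.2 = x.2 → w = x ∨ w = zc) ∧
      (∀ w ∈ S, L w.1 w.2 = L x.1 x.2 → w = x ∨ w = zl) := by
    intro x hx
    obtain ⟨zr, hzrS, hzrx, hzr1, hzrf, hzrC⟩ :=
      pair_structure S f (fun y => y.1) hx (haS x hx) (hacard x hx)
    obtain ⟨zc, hzcS, hzcx, hzc2, hzcf, hzcC⟩ :=
      pair_structure S f (fun y => y.2) hx (hbS x hx) (hbcard x hx)
    obtain ⟨zl, hzlS, hzlx, hzlL, hzlf, hzlC⟩ :=
      pair_structure S f (fun y => L y.1 y.2) hx (hcS x hx) (hccard x hx)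
    refine ⟨zr, hzrS, zc, hzcS, zl, hzlS, hzrx, hzcx, hzlx, ?_, ?_, ?_,
      hzr1, hzc2, hzlL, hzrf, hzcf, hzlf, hzrC, hzcC, hzlC⟩
    · intro h
      exact hzrx (hab zr hzrS x hx hzr1 (h ▸ hzc2))
    · intro h
      exact hzrx (hac zr hzrS x hx hzr1 (h ▸ hzlL))
    · intro h
      exact hzcx (hbc zc hzcS x hx hzc2 (h ▸ hzlL))
  -- positive and negative parts
  set P : Finset (Fin n × Fin n) := S.filter (fun x => 0 < f x) with hPdef
  set M : Finset (Fin n × Fin n) := S.filter (fun x => f x < 0) with hMdef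
  have hPMsplit : P.card + M.card = 6 := by
    have h := Finset.card_filter_add_card_filter_not (s := S) (p := fun x => 0 < f x)
    have hMeq : S.filter (fun x => ¬ 0 < f x) = M := by
      apply Finset.ext
      intro y
      simp only [Finset.mem_filter, hMdef]
      constructor
      · rintro ⟨hyS, hy⟩
        exact ⟨hyS, lt_of_le_of_ne (le_of_not_gt hy) (hSf y hyS)⟩
      · rintro ⟨hyS, hy⟩
        exact ⟨hyS, not_lt.mpr (le_of_lt hy)⟩
    rw [hMeq] at h
    rw [← hcard]
    exact h
  -- mates of a positive vertex are negative, and vice versa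
  have hmatesub : ∀ x ∈ S, ∀ z ∈ S, f z = -f x → (x ∈ P → z ∈ M) ∧ (x ∈ M → z ∈ P) := by
    intro x hx z hz hfz
    constructor
    · intro hxP
      have : 0 < f x := (Finset.mem_filter.mp hxP).2
      exact Finset.mem_filter.mpr ⟨hz, by rw [hfz]; linarith⟩
    · intro hxM
      have : f x < 0 := (Finset.mem_filter.mp hxM).2
      exact Finset.mem_filter.mpr ⟨hz, by rw [hfz]; linarith⟩
  have hPge : ∀ x ∈ P, 3 ≤ M.card := by
    intro x hxP
    have hx : x ∈ S := Finset.mem_filter.mp hxP |>.1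
    obtain ⟨zr, hzrS, zc, hzcS, zl, hzlS, _, _, _, hrc, hrl, hcl, _, _, _,
      hzrf, hzcf, hzlf, _, _, _⟩ := hmates x hx
    have hsub : ({zr, zc, zl} : Finset (Fin n × Fin n)) ⊆ M := by
      intro w hw
      simp only [Finset.mem_insert, Finset.mem_singleton] at hw
      rcases hw with rfl | rfl | rfl
      · exact (hmatesub x hx w hzrS hzrf).1 hxP
      · exact (hmatesub x hx w hzcS hzcf).1 hxP
      · exact (hmatesub x hx w hzlS hzlf).1 hxP
    have h3 : ({zr, zc, zl} : Finset (Fin n × Fin n)).card = 3 :=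
      Finset.card_eq_three.mpr ⟨zr, zc, zl, hrc, hrl, hcl, rfl⟩
    rw [← h3]
    exact Finset.card_le_card hsub
  have hMge : ∀ x ∈ M, 3 ≤ P.card := by
    intro x hxM
    have hx : x ∈ S := Finset.mem_filter.mp hxM |>.1
    obtain ⟨zr, hzrS, zc, hzcS, zl, hzlS, _, _, _, hrc, hrl, hcl, _, _, _,
      hzrf, hzcf, hzlf, _, _, _⟩ := hmates x hx
    have hsub : ({zr, zc, zl} : Finset (Fin n × Fin n)) ⊆ P := by
      intro w hw
      simp only [Finset.mem_insert, Finset.mem_singleton] at hw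
      rcases hw with rfl | rfl | rfl
      · exact (hmatesub x hx w hzrS hzrf).2 hxM
      · exact (hmatesub x hx w hzcS hzcf).2 hxM
      · exact (hmatesub x hx w hzlS hzlf).2 hxM
    have h3 : ({zr, zc, zl} : Finset (Fin n × Fin n)).card = 3 :=
      Finset.card_eq_three.mpr ⟨zr, zc, zl, hrc, hrl, hcl, rfl⟩
    rw [← h3]
    exact Finset.card_le_card hsub
  have hPM3 : P.card = 3 ∧ M.card = 3 := by
    have hSne : S.Nonempty := by rw [← Finset.card_pos, hcard]; omega
    obtain ⟨x0, hx0⟩ := hSne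
    have hx0f := hSf x0 hx0
    have hboth : P.Nonempty ∧ M.Nonempty := by
      obtain ⟨zr, hzrS, _, _, _, _, _, _, _, _, _, _, _, _, _, hzrf, _, _, _, _, _⟩ :=
        hmates x0 hx0
      rcases lt_or_gt_of_ne hx0f with hneg | hpos
      · have hx0M : x0 ∈ M := Finset.mem_filter.mpr ⟨hx0, hneg⟩
        exact ⟨⟨zr, (hmatesub x0 hx0 zr hzrS hzrf).2 hx0M⟩, ⟨x0, hx0M⟩⟩
      · have hx0P : x0 ∈ P := Finset.mem_filter.mpr ⟨hx0, hpos⟩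
        exact ⟨⟨x0, hx0P⟩, ⟨zr, (hmatesub x0 hx0 zr hzrS hzrf).1 hx0P⟩⟩
    obtain ⟨⟨p0, hp0⟩, ⟨m0, hm0⟩⟩ := hboth
    have h1 := hPge p0 hp0
    have h2 := hMge m0 hm0
    omega
  -- adjacency: positive to negative
  have hone : ∀ x ∈ S, ∀ y ∈ S, 0 < f x → f y < 0 → (LSGraph L).Adj x y := by
    intro x hx y hy hxpos hyneg
    have hxP : x ∈ P := Finset.mem_filter.mpr ⟨hx, hxpos⟩
    have hyM : y ∈ M := Finset.mem_filter.mpr ⟨hy, hyneg⟩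
    obtain ⟨zr, hzrS, zc, hzcS, zl, hzlS, hzrx, hzcx, hzlx, hrc, hrl, hcl,
      hzr1, hzc2, hzlL, hzrf, hzcf, hzlf, _, _, _⟩ := hmates x hx
    have hsub : ({zr, zc, zl} : Finset (Fin n × Fin n)) ⊆ M := by
      intro w hw
      simp only [Finset.mem_insert, Finset.mem_singleton] at hw
      rcases hw with rfl | rfl | rfl
      · exact (hmatesub x hx w hzrS hzrf).1 hxP
      · exact (hmatesub x hx w hzcS hzcf).1 hxP
      · exact (hmatesub x hx w hzlS hzlf).1 hxP
    have h3 : ({zr, zc, zl} : Finset (Fin n × Fin n)).card = 3 :=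
      Finset.card_eq_three.mpr ⟨zr, zc, zl, hrc, hrl, hcl, rfl⟩
    have hMeq : M = ({zr, zc, zl} : Finset (Fin n × Fin n)) :=
      (Finset.eq_of_subset_of_card_le hsub (by rw [h3, hPM3.2])).symm
    rw [hMeq] at hyM
    simp only [Finset.mem_insert, Finset.mem_singleton] at hyM
    rw [LSGraph, SimpleGraph.fromRel_adj]
    rcases hyM with rfl | rfl | rfl
    · exact ⟨Ne.symm hzrx, Or.inr (Or.inl hzr1)⟩
    · exact ⟨Ne.symm hzcx, Or.inr (Or.inr (Or.inl hzc2))⟩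
    · exact ⟨Ne.symm hzlx, Or.inr (Or.inr (Or.inr hzlL))⟩
  -- adjacency characterization
  have hAdjChar : ∀ x y : Fin n × Fin n, f x ≠ 0 → f y ≠ 0 →
      ((LSGraph L).Adj x y ↔ (0 < f x ∧ f y < 0) ∨ (f x < 0 ∧ 0 < f y)) := by
    intro x y hfx hfy
    have hx : x ∈ S := (hSmem x).mpr hfx
    have hy : y ∈ S := (hSmem y).mpr hfy
    constructor
    · intro hadj
      rw [LSGraph, SimpleGraph.fromRel_adj] at hadj
      obtain ⟨hne, hrel⟩ := hadj
      have hyx : y ≠ x := Ne.symm hne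
      have hkey : y.1 = x.1 ∨ y.2 = x.2 ∨ L y.1 y.2 = L x.1 x.2 := by
        rcases hrel with h | h
        · rcases h with h | h | h
          · exact Or.inl h.symm
          · exact Or.inr (Or.inl h.symm)
          · exact Or.inr (Or.inr h.symm)
        · exact h
      obtain ⟨zr, hzrS, zc, hzcS, zl, hzlS, _, _, _, _, _, _, _, _, _,
        hzrf, hzcf, hzlf, hCr, hCc, hCl⟩ := hmates x hx
      have hfyx : f y = -f x := by
        rcases hkey with h | h | h
        · rcases hCr y hy h with rfl | rfl
          · exact absurd rfl hyx
          · exact hzrf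
        · rcases hCc y hy h with rfl | rfl
          · exact absurd rfl hyx
          · exact hzcf
        · rcases hCl y hy h with rfl | rfl
          · exact absurd rfl hyx
          · exact hzlf
      rcases lt_or_gt_of_ne hfx with hneg | hpos
      · exact Or.inr ⟨hneg, by rw [hfyx]; linarith⟩
      · exact Or.inl ⟨hpos, by rw [hfyx]; linarith⟩
    · rintro (⟨h1, h2⟩ | ⟨h1, h2⟩)
      · exact hone x hx y hy h1 h2
      · exact ((LSGraph L).adj_symm (hone y hy x hx h2 h1))
  -- subtype cardinalities
  have hPcard : Fintype.card {x : Fin n × Fin n // f x ≠ 0 ∧ 0 < f x} = 3 := by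
    rw [Fintype.card_subtype]
    have heq : Finset.univ.filter (fun x : Fin n × Fin n => f x ≠ 0 ∧ 0 < f x) = P := by
      apply Finset.ext
      intro y
      rw [hPdef, hSdef]
      simp only [Finset.mem_filter, Finset.mem_univ, true_and]
    rw [heq, hPM3.1]
  have hMcard : Fintype.card {x : Fin n × Fin n // f x ≠ 0 ∧ ¬ 0 < f x} = 3 := by
    rw [Fintype.card_subtype]
    have heq : Finset.univ.filter (fun x : Fin n × Fin n => f x ≠ 0 ∧ ¬ 0 < f x) = M := by
      apply Finset.ext
      intro y
      rw [hMdef, hSdef]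
      simp only [Finset.mem_filter, Finset.mem_univ, true_and]
      constructor
      · rintro ⟨h1, h2⟩
        exact ⟨h1, lt_of_le_of_ne (le_of_not_gt h2) h1⟩
      · rintro ⟨h1, h2⟩
        exact ⟨h1, not_lt.mpr (le_of_lt h2)⟩
    rw [heq, hPM3.2]
  -- construct the isomorphism
  have cardP : Fintype.card {z : {x : Fin n × Fin n | f x ≠ 0} // 0 < f z.1} = 3 := by
    exact (Fintype.card_congr (Equiv.subtypeSubtypeEquivSubtypeInter
      (fun x => f x ≠ 0) (fun x => 0 < f x))).trans hPcard
  have cardM : Fintype.card {z : {x : Fin n × Fin n | f x ≠ 0} // ¬ 0 < f z.1} = 3 := by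
    exact (Fintype.card_congr (Equiv.subtypeSubtypeEquivSubtypeInter
      (fun x => f x ≠ 0) (fun x => ¬ 0 < f x))).trans hMcard
  set e1 : {z : {x : Fin n × Fin n | f x ≠ 0} // 0 < f z.1} ≃ Fin 3 :=
    Fintype.equivFinOfCardEq cardP with he1
  set e2 : {z : {x : Fin n × Fin n | f x ≠ 0} // ¬ 0 < f z.1} ≃ Fin 3 :=
    Fintype.equivFinOfCardEq cardM with he2
  set e : {x : Fin n × Fin n | f x ≠ 0} ≃ (Fin 3 ⊕ Fin 3) :=
    (Equiv.sumCompl (fun z : {x : Fin n × Fin n | f x ≠ 0} => 0 < f z.1)).symm.trans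
      (e1.sumCongr e2) with he
  have hepos : ∀ z : {x : Fin n × Fin n | f x ≠ 0}, (h : 0 < f z.1) →
      e z = Sum.inl (e1 ⟨z, h⟩) := by
    intro z h
    rw [he]
    simp only [Equiv.trans_apply, Equiv.sumCongr_apply]
    rw [Equiv.sumCompl_symm_apply_of_pos (p := fun z : {x : Fin n × Fin n | f x ≠ 0} => 0 < f z.1) (a := z) h]
    rfl
  have heneg : ∀ z : {x : Fin n × Fin n | f x ≠ 0}, (h : ¬ 0 < f z.1) →
      e z = Sum.inr (e2 ⟨z, h⟩) := by
    intro z h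
    rw [he]
    simp only [Equiv.trans_apply, Equiv.sumCongr_apply]
    rw [Equiv.sumCompl_symm_apply_of_neg (p := fun z : {x : Fin n × Fin n | f x ≠ 0} => 0 < f z.1) (a := z) h]
    rfl
  refine ⟨⟨e, ?_⟩⟩
  intro a b
  have hfa : f a.1 ≠ 0 := a.2
  have hfb : f b.1 ≠ 0 := b.2
  have hchar := hAdjChar a.1 b.1 hfa hfb
  have hind : ((LSGraph L).induce {x | f x ≠ 0}).Adj a b ↔ (LSGraph L).Adj a.1 b.1 := by
    simp [SimpleGraph.induce]
  rw [hind, hchar]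
  by_cases ha : 0 < f a.1 <;> by_cases hb : 0 < f b.1
  · rw [hepos a ha, hepos b hb]
    simp only [completeBipartiteGraph, Sum.isLeft_inl, Sum.isRight_inl]
    constructor
    · rintro (⟨-, h⟩ | ⟨h, -⟩) <;> simp at h
    · rintro (⟨h1, h2⟩ | ⟨h1, h2⟩) <;> exfalso <;> linarith
  · rw [hepos a ha, heneg b hb]
    simp only [completeBipartiteGraph, Sum.isLeft_inl, Sum.isRight_inr, Sum.isLeft_inr,
      Sum.isRight_inl]
    simp only [true_iff, iff_true, and_true, true_and, and_false, false_and, or_false, false_or]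
    exact iff_of_true (Or.inl trivial) (Or.inl ⟨ha, lt_of_le_of_ne (le_of_not_gt hb) hfb⟩)
  · rw [heneg a ha, hepos b hb]
    simp only [completeBipartiteGraph, Sum.isLeft_inl, Sum.isRight_inr, Sum.isLeft_inr,
      Sum.isRight_inl]
    simp only [true_iff, iff_true, and_true, true_and, and_false, false_and, or_false, false_or]
    exact iff_of_true (Or.inr trivial) (Or.inr ⟨lt_of_le_of_ne (le_of_not_gt ha) hfa, hb⟩)
  · rw [heneg a ha, heneg b hb]
    simp only [completeBipartiteGraph, Sum.isLeft_inr, Sum.isRight_inr]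
    constructor
    · rintro (⟨h, -⟩ | ⟨-, h⟩) <;> simp at h
    · rintro (⟨h1, h2⟩ | ⟨h1, h2⟩) <;> exfalso <;> linarith
end

section
/- Every eigenfunction of a latin square graph corresponding to eigenvalue -3 has at least 6 nonzero values. -/
open Finset Function

section Fibers

variable {α β M : Type*} [DecidableEq β]

theorem exists_ne_apply_ne_zero_of_sum_fiber_eq_zero [Fintype α] [AddCommMonoid M]
    {f : α → M} {g : α → β} {x : α} (hsum : ∑ y with g y = g x, f y = 0) (hx : f x ≠ 0) :
    ∃ y, y ≠ x ∧ f y ≠ 0 ∧ g y = g x := by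
  by_contra! h
  refine hx (hsum ▸ (sum_eq_single_of_mem x (by simp) fun y hy hyx => ?_).symm)
  by_contra hy0
  exact h y hyx hy0 (mem_filter.mp hy).2

theorem add_eq_zero_of_sum_fiber_eq_zero [Fintype α] [DecidableEq α] [AddCommMonoid M]
    {f : α → M} {g : α → β} {a b : α} (hab : a ≠ b) (hsum : ∑ y with g y = g a, f y = 0)
    (hb : g b = g a) (hsupp : ∀ y, f y ≠ 0 → g y = g a → y = a ∨ y = b) : f a + f b = 0 := by
  rw [← sum_pair hab, ← hsum]
  refine sum_subset (by simp [insert_subset_iff, hb]) fun y hy hyab => ?_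
  by_contra hy0
  simp only [mem_insert, mem_singleton] at hyab
  exact hyab (hsupp y hy0 (mem_filter.mp hy).2)

theorem two_mul_card_image_le_card {g : α → β} {s : Finset α}
    (h : ∀ x ∈ s, ∃ y ∈ s, y ≠ x ∧ g y = g x) : 2 * #(s.image g) ≤ #s := by
  refine mul_card_image_le_card s 2 fun b hb => ?_
  obtain ⟨x, hx, rfl⟩ := mem_image.mp hb
  obtain ⟨y, hy, hyx, hgy⟩ := h x hx
  exact one_lt_card.mpr ⟨x, by simp [hx], y, by simp [hy, hgy], hyx.symm⟩

end Fibers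

theorem Finset.eq_or_eq_of_card_le_two {β : Type*} {t : Finset β} (ht : #t ≤ 2) {a b c : β}
    (ha : a ∈ t) (hb : b ∈ t) (hab : a ≠ b) (hc : c ∈ t) : c = a ∨ c = b := by
  by_contra! h
  have := two_lt_card.mpr ⟨a, ha, b, hb, c, hc, hab, h.1.symm, h.2.symm⟩
  omega

theorem LSGraph.adj_iff {n : ℕ} (L : Fin n → Fin n → Fin n) (x y : Fin n × Fin n) :
    (LSGraph L).Adj x y ↔ y ≠ x ∧ (y.1 = x.1 ∨ y.2 = x.2 ∨ uncurry L y = uncurry L x) := by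
  rw [LSGraph, SimpleGraph.fromRel_adj, ne_comm]
  simp only [eq_comm (a := x.1), eq_comm (a := x.2), eq_comm (a := L x.1 x.2)]
  tauto

namespace IsLatin

variable {n : ℕ} {L : Fin n → Fin n → Fin n}

theorem bijective_row (hL : IsLatin L) (r : Fin n) : Bijective (L r) :=
  Finite.injective_iff_bijective.mp (hL.1 r)

theorem bijective_col (hL : IsLatin L) (c : Fin n) : Bijective (fun r => L r c) :=
  Finite.injective_iff_bijective.mp (hL.2 c)

theorem eq_of_fst_eq (hL : IsLatin L) {x y : Fin n × Fin n} (h1 : y.1 = x.1)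
    (h : uncurry L y = uncurry L x) : y = x := by
  obtain ⟨r, c⟩ := x
  obtain ⟨r', c'⟩ := y
  obtain rfl : r = r' := h1.symm
  exact congrArg (Prod.mk r) (hL.1 r h)

theorem eq_of_snd_eq (hL : IsLatin L) {x y : Fin n × Fin n} (h2 : y.2 = x.2)
    (h : uncurry L y = uncurry L x) : y = x := by
  obtain ⟨r, c⟩ := x
  obtain ⟨r', c'⟩ := y
  obtain rfl : c = c' := h2.symm
  exact congrArg (·, c) (hL.2 c h)

theorem sum_adj_add_three_mul {K : Type*} [CommSemiring K] [DecidableRel (LSGraph L).Adj]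
    (hL : IsLatin L) (f : Fin n × Fin n → K) (x : Fin n × Fin n) :
    ∑ y with (LSGraph L).Adj x y, f y + 3 * f x =
      ∑ y with y.1 = x.1, f y + ∑ y with y.2 = x.2, f y +
        ∑ y with uncurry L y = uncurry L x, f y := by
  have hx : 3 * f x = ∑ y, if y = x then 3 * f y else 0 := by simp
  simp only [hx, sum_filter, ← sum_add_distrib]
  refine sum_congr rfl fun y _ => ?_
  by_cases hyx : y = x
  · subst hyx
    simp only [SimpleGraph.irrefl, ↓reduceIte, zero_add]
    ring
  · have h12 : ¬(y.1 = x.1 ∧ y.2 = x.2) := fun h => hyx (Prod.ext h.1 h.2)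
    have h13 : ¬(y.1 = x.1 ∧ uncurry L y = uncurry L x) := fun h =>
      hyx (hL.eq_of_fst_eq h.1 h.2)
    have h23 : ¬(y.2 = x.2 ∧ uncurry L y = uncurry L x) := fun h =>
      hyx (hL.eq_of_snd_eq h.1 h.2)
    simp only [LSGraph.adj_iff, hyx]
    split_ifs <;> simp_all

theorem eq_zero_of_add_add_eq_zero {K : Type*} [Field K] [CharZero K] (hL : IsLatin L)
    {R C S : Fin n → K} {F : K} (hR : ∑ r, R r = F) (hC : ∑ c, C c = F) (hS : ∑ s, S s = F)
    (h : ∀ r c, R r + C c + S (L r c) = 0) : R = 0 ∧ C = 0 ∧ S = 0 := by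
  have hrow r : (n : K) * R r + 2 * F = 0 := by
    have := sum_eq_zero (s := univ) fun c _ => h r c
    rw [sum_add_distrib, sum_add_distrib, (hL.bijective_row r).sum_comp S, hS, hC, sum_const,
      card_univ, Fintype.card_fin, nsmul_eq_mul] at this
    linear_combination this
  have hcol c : (n : K) * C c + 2 * F = 0 := by
    have := sum_eq_zero (s := univ) fun r _ => h r c
    rw [sum_add_distrib, sum_add_distrib, (hL.bijective_col c).sum_comp S, hS, hR, sum_const,
      card_univ, Fintype.card_fin, nsmul_eq_mul] at this
    linear_combination this
  have hF : (n : K) * F = 0 := by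
    have := sum_eq_zero (s := univ) fun r _ => hrow r
    rw [sum_add_distrib, ← mul_sum, hR, sum_const, card_univ, Fintype.card_fin,
      nsmul_eq_mul] at this
    linear_combination this / 3
  have cancel (i : Fin n) {x : K} (hx : (n : K) * x + 2 * F = 0) : x = 0 := by
    have hn : (n : K) ≠ 0 := Nat.cast_ne_zero.mpr (Fin.pos i).ne'
    have hF0 : F = 0 := (mul_eq_zero.mp hF).resolve_left hn
    simpa [hn, hF0] using hx
  have hR0 : R = 0 := funext fun r => cancel r (hrow r)
  have hC0 : C = 0 := funext fun c => cancel c (hcol c)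
  refine ⟨hR0, hC0, funext fun s => ?_⟩
  obtain ⟨c, hc⟩ := (hL.bijective_row s).2 s
  simpa [hR0, hC0, hc] using h s c

theorem six_le_card_support {K : Type*} [Field K] [CharZero K] [DecidableEq K]
    (hL : IsLatin L) {f : Fin n × Fin n → K} (hf : f ≠ 0)
    (hrow : ∀ r, ∑ y with y.1 = r, f y = 0) (hcol : ∀ c, ∑ y with y.2 = c, f y = 0)
    (hlet : ∀ s, ∑ y with uncurry L y = s, f y = 0) : 6 ≤ #{x | f x ≠ 0} := by
  set s : Finset (Fin n × Fin n) := {x | f x ≠ 0}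
  by_contra! hs
  have mem_s {y} : y ∈ s ↔ f y ≠ 0 := by simp [s]
  have partners {g : Fin n × Fin n → Fin n} (hg : ∀ b, ∑ y with g y = b, f y = 0) :
      ∀ x ∈ s, ∃ y ∈ s, y ≠ x ∧ g y = g x := fun x hx => by
    obtain ⟨y, hyx, hy, hgy⟩ := exists_ne_apply_ne_zero_of_sum_fiber_eq_zero (hg _) (mem_s.1 hx)
    exact ⟨y, mem_s.2 hy, hyx, hgy⟩
  have image_le_two {g : Fin n × Fin n → Fin n} (hg : ∀ b, ∑ y with g y = b, f y = 0) :
      #(s.image g) ≤ 2 := by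
    have := two_mul_card_image_le_card (partners hg)
    omega
  obtain ⟨⟨r1, c1⟩, h11⟩ : ∃ x, f x ≠ 0 := Function.ne_iff.mp hf
  obtain ⟨⟨r, c2⟩, h12, hne12, hr : r = r1⟩ := partners hrow _ (mem_s.2 h11)
  obtain ⟨⟨r2, c⟩, h21, hne21, hc : c = c1⟩ := partners hcol _ (mem_s.2 h11)
  subst r c
  have hc12 : c1 ≠ c2 := by rintro rfl; exact hne12 rfl
  have hr12 : r1 ≠ r2 := by rintro rfl; exact hne21 rfl
  have hrows y (hy : f y ≠ 0) : y.1 = r1 ∨ y.1 = r2 :=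
    eq_or_eq_of_card_le_two (image_le_two hrow) (mem_image_of_mem _ (mem_s.2 h11))
      (mem_image_of_mem _ h21) hr12 (mem_image_of_mem _ (mem_s.2 hy))
  have hcols y (hy : f y ≠ 0) : y.2 = c1 ∨ y.2 = c2 :=
    eq_or_eq_of_card_le_two (image_le_two hcol) (mem_image_of_mem _ (mem_s.2 h11))
      (mem_image_of_mem _ h12) hc12 (mem_image_of_mem _ (mem_s.2 hy))
  have hdiag y (hy : f y ≠ 0) (hyL : uncurry L y = uncurry L (r1, c1)) :
      y = (r1, c1) ∨ y = (r2, c2) := by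
    rcases hrows y hy with h1 | h1
    · exact .inl (hL.eq_of_fst_eq h1 hyL)
    rcases hcols y hy with h2 | h2
    · exact absurd (congrArg Prod.fst (hL.eq_of_snd_eq h2 hyL)) (by simpa [h1] using hr12.symm)
    · exact .inr (Prod.ext h1 h2)
  have hL22 : uncurry L (r2, c2) = uncurry L (r1, c1) := by
    obtain ⟨y, hyx, hy, hyL⟩ := exists_ne_apply_ne_zero_of_sum_fiber_eq_zero (hlet _) h11
    obtain rfl | rfl := hdiag y hy hyL
    exacts [absurd rfl hyx, hyL]
  have hcol1 : f (r1, c1) + f (r2, c1) = 0 :=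
    add_eq_zero_of_sum_fiber_eq_zero (by simpa) (hcol c1) rfl fun y hy h2 =>
      (hrows y hy).imp (Prod.ext · h2) (Prod.ext · h2)
  have hrow2 : f (r2, c1) + f (r2, c2) = 0 :=
    add_eq_zero_of_sum_fiber_eq_zero (by simpa) (hrow r2) rfl fun y hy h1 =>
      (hcols y hy).imp (Prod.ext h1 ·) (Prod.ext h1 ·)
  have hlet1 : f (r1, c1) + f (r2, c2) = 0 :=
    add_eq_zero_of_sum_fiber_eq_zero (by simp [hr12]) (hlet _) hL22 hdiag
  exact h11 (by linear_combination (hcol1 + hlet1 - hrow2) / 2)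

end IsLatin

open scoped Classical in
theorem stmt15_general {n : ℕ} (L : Fin n → Fin n → Fin n) (hL : IsLatin L)
    (f : Fin n × Fin n → ℝ) (hf : f ≠ 0)
    (heig : ∀ x, ∑ y ∈ Finset.univ.filter (fun y => (LSGraph L).Adj x y), f y = -3 * f x) :
    6 ≤ (Finset.univ.filter (fun x => f x ≠ 0)).card := by
  have hlines (r c : Fin n) : ∑ y with y.1 = r, f y + ∑ y with y.2 = c, f y +
      ∑ y with uncurry L y = uncurry L (r, c), f y = 0 := by
    linear_combination heig (r, c) - hL.sum_adj_add_three_mul f (r, c)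
  obtain ⟨hrow, hcol, hlet⟩ := hL.eq_zero_of_add_add_eq_zero (sum_fiberwise univ Prod.fst f)
    (sum_fiberwise univ Prod.snd f) (sum_fiberwise univ (uncurry L) f) hlines
  exact hL.six_le_card_support hf (congrFun hrow) (congrFun hcol) (congrFun hlet)

open scoped Classical in
/-- Every eigenfunction of a latin square graph for eigenvalue `-3` has at least 6 nonzeros. -/
theorem stmt15 {n : ℕ} (hn : 3 ≤ n) (L : Fin n → Fin n → Fin n) (hL : IsLatin L)
    (f : Fin n × Fin n → ℝ) (hf : f ≠ 0)
    (heig : ∀ x, ∑ y ∈ Finset.univ.filter (fun y => (LSGraph L).Adj x y), f y = -3 * f x) :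
    6 ≤ (Finset.univ.filter (fun x => f x ≠ 0)).card :=
  stmt15_general L hL f hf heig
end

section
/- The 4×5 latin rectangle with rows [0,3,4,2,1], [4,0,1,3,2], [2,4,0,1,3], [3,1,2,0,4] is K_{3,3}-free, and its unique extension to a 5×5 latin square (by adding the row [1,2,3,4,0]) is not K_{3,3}-free. -/
/-- An `m×n` latin rectangle (or square, if `m = n`) is `K_{3,3}`-free if it contains no
`K_{3,3}` pattern: three distinct rows, three distinct columns, with
`L(r1,c2)=L(r2,c1)`, `L(r2,c3)=L(r3,c2)`, `L(r3,c1)=L(r1,c3)` and the three common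
values pairwise distinct. -/
def K33Free {m n : ℕ} (L : Fin m → Fin n → Fin n) : Prop :=
  ¬ ∃ r1 r2 r3 : Fin m, ∃ c1 c2 c3 : Fin n,
      r1 ≠ r2 ∧ r1 ≠ r3 ∧ r2 ≠ r3 ∧ c1 ≠ c2 ∧ c1 ≠ c3 ∧ c2 ≠ c3 ∧
      L r1 c2 = L r2 c1 ∧ L r2 c3 = L r3 c2 ∧ L r3 c1 = L r1 c3 ∧
      L r1 c2 ≠ L r2 c3 ∧ L r1 c2 ≠ L r3 c1 ∧ L r2 c3 ≠ L r3 c1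

/-- The `4×5` latin rectangle. -/
def Rect : Fin 4 → Fin 5 → Fin 5 :=
  ![![0, 3, 4, 2, 1], ![4, 0, 1, 3, 2], ![2, 4, 0, 1, 3], ![3, 1, 2, 0, 4]]

/-- Its extension to a `5×5` latin square by the row `[1,2,3,4,0]`. -/
def Sq : Fin 5 → Fin 5 → Fin 5 :=
  ![![0, 3, 4, 2, 1], ![4, 0, 1, 3, 2], ![2, 4, 0, 1, 3], ![3, 1, 2, 0, 4], ![1, 2, 3, 4, 0]]

/-- In a square with injective columns, every column is a permutation of the symbols, so the
last row consists of the symbols missing from the columns of the other rows. -/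
theorem eq_of_injective_columns_of_castSucc_eq {n : ℕ}
    {M N : Fin (n + 1) → Fin (n + 1) → Fin (n + 1)}
    (hM : ∀ c, Function.Injective fun r => M r c) (hN : ∀ c, Function.Injective fun r => N r c)
    (h : ∀ (i : Fin n) j, M i.castSucc j = N i.castSucc j) : M = N := by
  funext r j
  induction r using Fin.lastCases with
  | cast i => exact h i j
  | last =>
    obtain ⟨r, hr⟩ := (Finite.surjective_of_injective (hM j)) (N (Fin.last n) j)
    induction r using Fin.lastCases with
    | last => exact hr
    | cast i =>
      exact absurd (hN j ((h i j).symm.trans hr)) (Fin.castSucc_ne_last i)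

theorem K33Free_rect : K33Free Rect := by
  unfold K33Free Rect
  decide

theorem not_K33Free_sq : ¬ K33Free Sq :=
  not_not.mpr ⟨0, 1, 4, 2, 4, 1, by decide⟩

theorem isLatin_sq : IsLatin Sq := by
  unfold IsLatin Sq
  decide

theorem sq_castSucc (i : Fin 4) (j : Fin 5) : Sq i.castSucc j = Rect i j := by
  revert i j
  decide

/-- The rectangle `Rect` is `K_{3,3}`-free; its unique latin-square extension is `Sq`,
which is not `K_{3,3}`-free. -/
theorem stmt16 :
    K33Free Rect ∧
    (∀ M : Fin 5 → Fin 5 → Fin 5, IsLatin M →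
      (∀ (i : Fin 4) (j : Fin 5), M i.castSucc j = Rect i j) → M = Sq) ∧
    ¬ K33Free Sq := by
  refine ⟨K33Free_rect, fun M hM hRect => ?_, not_K33Free_sq⟩
  exact eq_of_injective_columns_of_castSucc_eq hM.2 isLatin_sq.2 fun i j =>
    (hRect i j).trans (sq_castSucc i j).symm
end
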